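/- arXiv:1906.02969 — 6 statements merged into one kernel-verified Lean document; each statement's English description precedes it below -/
import Mathlib

section
/- For every d > 0, the function p(t) = (1/(d·√(2π)))·√((1/t)·log(d²/t)) is a probability density on (0, d²): p ≥ 0 on (0, d²) and ∫₀^{d²} p(t) dt = 1. -/
open MeasureTheory

lemma key_gamma : ∫ x in Set.Ioi (0:ℝ), Real.sqrt x * Real.exp (-(x/2)) = Real.sqrt (2 * Real.pi) := by
  have h := Real.integral_rpow_mul_exp_neg_mul_Ioi (a := 3/2) (r := 1/2) (by norm_num) (by norm_num)
  have heq : ∀ x ∈ Set.Ioi (0:ℝ), Real.sqrt x * Real.exp (-(x/2))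
      = x ^ ((3:ℝ)/2 - 1) * Real.exp (-(1/2 * x)) := by
    intro x hx
    rw [Real.sqrt_eq_rpow, show (3/2-1:ℝ)=1/2 by norm_num, show -(x/2) = -(1/2*x) by ring]
  rw [setIntegral_congr_fun measurableSet_Ioi heq, h]
  have h32 : Real.Gamma (3/2) = Real.sqrt Real.pi / 2 := by
    have : (3/2 : ℝ) = 1/2 + 1 := by norm_num
    rw [this, Real.Gamma_add_one (by norm_num), Real.Gamma_one_half_eq]
    ring
  rw [h32]
  have : ((1:ℝ)/(1/2)) ^ ((3:ℝ)/2) = 2 * Real.sqrt 2 := by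
    norm_num
    rw [show (3/2:ℝ) = 1 + 1/2 by norm_num, Real.rpow_add (by norm_num), Real.rpow_one,
      ← Real.sqrt_eq_rpow]
  rw [this, Real.sqrt_mul (by norm_num)]
  ring

lemma sqrt_exp_eq (x : ℝ) : Real.sqrt (Real.exp x) = Real.exp (x/2) := by
  rw [show Real.exp x = (Real.exp (x/2))^2 by rw [← Real.exp_nat_mul]; ring_nf,
    Real.sqrt_sq (Real.exp_nonneg _)]


/-- For every `d > 0`, `p(t) = (1/(d√(2π)))·√((1/t)·log(d²/t))` is a probability density
on `(0, d²)`: it is nonnegative there and integrates to `1`. -/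
theorem spheroid_exit_density (d : ℝ) (hd : 0 < d) :
    (∀ t ∈ Set.Ioo (0 : ℝ) (d ^ 2),
      0 ≤ (1 / (d * Real.sqrt (2 * Real.pi))) * Real.sqrt ((1 / t) * Real.log (d ^ 2 / t))) ∧
    (∫ t in Set.Ioo (0 : ℝ) (d ^ 2),
      (1 / (d * Real.sqrt (2 * Real.pi))) * Real.sqrt ((1 / t) * Real.log (d ^ 2 / t))) = 1 := by
  have hd2 : (0:ℝ) < d ^ 2 := by positivity
  constructor
  · intro t ht
    positivity
  -- change of variables t = d² exp(-x)
  set f : ℝ → ℝ := fun x => d ^ 2 * Real.exp (-x) with hf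
  set g : ℝ → ℝ := fun t => Real.sqrt ((1 / t) * Real.log (d ^ 2 / t)) with hg
  have himg : f '' Set.Ioi (0:ℝ) = Set.Ioo (0:ℝ) (d ^ 2) := by
    ext t
    constructor
    · rintro ⟨x, hx, rfl⟩
      exact ⟨by positivity, by
        have : Real.exp (-x) < 1 := Real.exp_lt_one_iff.2 (by simpa using hx)
        calc d ^ 2 * Real.exp (-x) < d ^ 2 * 1 := by nlinarith
        _ = d ^ 2 := by ring⟩
    · rintro ⟨ht0, ht1⟩
      refine ⟨Real.log (d ^ 2 / t), ?_, ?_⟩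
      · exact Real.log_pos (by rw [lt_div_iff₀ ht0]; linarith)
      · simp only [hf]
        rw [Real.exp_neg, Real.exp_log (by positivity)]
        field_simp
  have hderiv : ∀ x ∈ Set.Ioi (0:ℝ), HasDerivWithinAt f (-(d ^ 2 * Real.exp (-x))) (Set.Ioi 0) x := by
    intro x hx
    have : HasDerivAt f (d ^ 2 * (Real.exp (-x) * (-1))) x := by
      exact (Real.hasDerivAt_exp (-x)).comp x (hasDerivAt_neg x) |>.const_mul (d ^ 2)
    simpa [mul_comm, mul_assoc] using this.hasDerivWithinAt
  have hinj : Set.InjOn f (Set.Ioi 0) := by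
    intro a _ b _ hab
    have : Real.exp (-a) = Real.exp (-b) := mul_left_cancel₀ (ne_of_gt hd2) hab
    simpa using Real.exp_injective this
  have hcv := integral_image_eq_integral_abs_deriv_smul measurableSet_Ioi hderiv hinj g
  rw [himg] at hcv
  have hsimp : ∀ x ∈ Set.Ioi (0:ℝ),
      |(-(d ^ 2 * Real.exp (-x)))| • g (f x) = d * (Real.sqrt x * Real.exp (-(x/2))) := by
    intro x hx
    have hx0 : (0:ℝ) < x := hx
    have habs : |(-(d ^ 2 * Real.exp (-x)))| = d ^ 2 * Real.exp (-x) := by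
      rw [abs_neg, abs_of_pos (by positivity)]
    have harg : (1 / f x) * Real.log (d ^ 2 / f x) = (Real.exp x / d ^ 2) * x := by
      simp only [hf]
      rw [Real.exp_neg]
      rw [show d ^ 2 / (d ^ 2 * (Real.exp x)⁻¹) = Real.exp x by field_simp, Real.log_exp]
      field_simp
    simp only [hg, smul_eq_mul, habs, harg]
    rw [Real.sqrt_mul (by positivity), Real.sqrt_div' _ (by positivity), sqrt_exp_eq,
      Real.sqrt_sq hd.le]
    have hee : Real.exp (-x) * Real.exp (x/2) = Real.exp (-(x/2)) ∧ Real.exp (-(x/2)) = Real.exp (-x/2) := by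
      exact ⟨by rw [← Real.exp_add]; ring_nf, by rw [neg_div]⟩
    have hd' : d ≠ 0 := ne_of_gt hd
    field_simp
    linear_combination hee.1
  rw [setIntegral_congr_fun measurableSet_Ioi hsimp] at hcv
  rw [integral_const_mul, hcv, integral_const_mul, key_gamma]
  have hs : Real.sqrt (2 * Real.pi) ≠ 0 := by positivity
  field_simp
end

section
/- Let d > 0 and, on a probability space, let U be uniformly distributed on (0,1) and N a standard Gaussian random variable, with U and N independent. Then the law of the random variable d²·U²·exp(−N²) is absolutely continuous with respect to Lebesgue measure, with density p(t) = (1/(d·√(2π)))·√((1/t)·log(d²/t)) on (0, d²) (and density 0 outside (0, d²)). Equivalently, the pushforward of the product measure under (u, n) ↦ d²·u²·exp(−n²) equals the measure with density p with respect to Lebesgue measure. -/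
open MeasureTheory ProbabilityTheory Real Set
open scoped ENNReal

/-- 1D version of the lintegral change of variables. -/
lemma lintegral_image_eq_lintegral_abs_deriv_mul' {s : Set ℝ} {f f' : ℝ → ℝ}
    (hs : MeasurableSet s) (hf' : ∀ x ∈ s, HasDerivWithinAt f (f' x) s x)
    (hf : Set.InjOn f s) (g : ℝ → ℝ≥0∞) :
    ∫⁻ x in f '' s, g x = ∫⁻ x in s, ENNReal.ofReal |f' x| * g (f x) := by
  simpa only [ContinuousLinearMap.det_toSpanSingleton] using
    lintegral_image_eq_lintegral_abs_det_fderiv_mul volume hs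
      (fun x hx => (hf' x hx).hasFDerivWithinAt) hf g

/-- Substitution `t = c·u²` on `(0,1)`. -/
lemma sq_substitution {c : ℝ} (hc : 0 < c) (g : ℝ → ℝ≥0∞) :
    ∫⁻ u in Set.Ioo (0:ℝ) 1, g (c * u ^ 2) =
      ∫⁻ t in Set.Ioo (0:ℝ) c, ENNReal.ofReal (1 / (2 * Real.sqrt (c * t))) * g t := by
  have hsc : 0 < Real.sqrt c := Real.sqrt_pos.2 hc
  set f : ℝ → ℝ := fun t => Real.sqrt t / Real.sqrt c with hf_def
  have himg : f '' Set.Ioo (0:ℝ) c = Set.Ioo (0:ℝ) 1 := by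
    ext y
    constructor
    · rintro ⟨t, ⟨ht0, htc⟩, rfl⟩
      have hst : 0 < Real.sqrt t := Real.sqrt_pos.2 ht0
      refine ⟨div_pos hst hsc, ?_⟩
      rw [div_lt_one hsc]
      exact Real.sqrt_lt_sqrt ht0.le htc
    · rintro ⟨hy0, hy1⟩
      refine ⟨c * y ^ 2, ⟨by positivity, ?_⟩, ?_⟩
      · have hy2 : y ^ 2 < 1 := by nlinarith
        nlinarith
      · simp only [hf_def]
        rw [Real.sqrt_mul hc.le, Real.sqrt_sq hy0.le]
        field_simp
  have hinj : Set.InjOn f (Set.Ioo (0:ℝ) c) := by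
    intro a ha b hb hab
    have : Real.sqrt a = Real.sqrt b := by
      have hab' : Real.sqrt a / Real.sqrt c = Real.sqrt b / Real.sqrt c := hab
      exact (div_left_inj' hsc.ne').1 hab'
    have := congrArg (fun x => x ^ 2) this
    simpa [Real.sq_sqrt ha.1.le, Real.sq_sqrt hb.1.le] using this
  have hderiv : ∀ t ∈ Set.Ioo (0:ℝ) c,
      HasDerivWithinAt f (1 / (2 * Real.sqrt (c * t))) (Set.Ioo (0:ℝ) c) t := by
    intro t ht
    have h1 : HasDerivAt f (1 / (2 * Real.sqrt t) / Real.sqrt c) t :=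
      (Real.hasDerivAt_sqrt ht.1.ne').div_const _
    have heq : 1 / (2 * Real.sqrt t) / Real.sqrt c = 1 / (2 * Real.sqrt (c * t)) := by
      rw [Real.sqrt_mul hc.le]
      ring
    rw [heq] at h1
    exact h1.hasDerivWithinAt
  have := lintegral_image_eq_lintegral_abs_deriv_mul' measurableSet_Ioo hderiv hinj
    (fun u => g (c * u ^ 2))
  rw [himg] at this
  rw [this]
  refine setLIntegral_congr_fun measurableSet_Ioo ?_
  intro t ht
  have h1 : c * f t ^ 2 = t := by
    simp only [hf_def, div_pow, Real.sq_sqrt ht.1.le, Real.sq_sqrt hc.le]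
    field_simp
  have h2 : |1 / (2 * Real.sqrt (c * t))| = 1 / (2 * Real.sqrt (c * t)) := by
    have h : 0 < Real.sqrt (c * t) := Real.sqrt_pos.2 (mul_pos hc ht.1)
    rw [abs_of_pos]; positivity
  beta_reduce
  rw [h1, h2]

lemma sqrt_exp' (x : ℝ) : Real.sqrt (Real.exp x) = Real.exp (x / 2) := by
  have h : Real.exp x = (Real.exp (x / 2)) ^ 2 := by
    rw [sq, ← Real.exp_add]
    ring_nf
  rw [h, Real.sqrt_sq (Real.exp_pos _).le]

/-- The Gaussian slice integral. -/
lemma slice_integral (d : ℝ) (hd : 0 < d) (g : ℝ → ℝ≥0∞) (t : ℝ) :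
    ∫⁻ n, gaussianPDF 0 1 n *
        (Set.Ioo (0:ℝ) (d ^ 2 * Real.exp (-n ^ 2))).indicator
          (fun t => ENNReal.ofReal (1 / (2 * Real.sqrt (d ^ 2 * Real.exp (-n ^ 2) * t))) * g t) t
      = ENNReal.ofReal (if t ∈ Set.Ioo (0 : ℝ) (d ^ 2) then
          (1 / (d * Real.sqrt (2 * Real.pi))) * Real.sqrt ((1 / t) * Real.log (d ^ 2 / t))
        else 0) * g t := by
  by_cases ht : t ∈ Set.Ioo (0 : ℝ) (d ^ 2)
  · obtain ⟨ht0, htd⟩ := ht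
    have hd2t : 1 < d ^ 2 / t := (one_lt_div ht0).2 htd
    set L : ℝ := Real.log (d ^ 2 / t) with hL_def
    have hL : 0 < L := Real.log_pos hd2t
    set r : ℝ := Real.sqrt L with hr_def
    have hr : 0 < r := Real.sqrt_pos.2 hL
    set C : ℝ≥0∞ := ENNReal.ofReal (1 / (2 * d * Real.sqrt (2 * Real.pi) * Real.sqrt t)) with hC_def
    have hpt : ∀ n : ℝ, gaussianPDF 0 1 n *
        (Set.Ioo (0:ℝ) (d ^ 2 * Real.exp (-n ^ 2))).indicator
          (fun t => ENNReal.ofReal (1 / (2 * Real.sqrt (d ^ 2 * Real.exp (-n ^ 2) * t))) * g t) t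
        = (Set.Ioo (-r) r).indicator (fun _ => C * g t) n := by
      intro n
      have hh : Real.exp (-n^2) * Real.exp (n^2) = 1 := by
        rw [← Real.exp_add]; simp
      have hmem : t ∈ Set.Ioo (0:ℝ) (d ^ 2 * Real.exp (-n ^ 2)) ↔ n ∈ Set.Ioo (-r) r := by
        constructor
        · rintro ⟨-, h2⟩
          have h3 : Real.exp (n ^ 2) < d ^ 2 / t := by
            rw [lt_div_iff₀ ht0]
            calc Real.exp (n ^ 2) * t
                < Real.exp (n ^ 2) * (d ^ 2 * Real.exp (-n ^ 2)) := by
                  exact mul_lt_mul_of_pos_left h2 (Real.exp_pos _)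
              _ = d ^ 2 * (Real.exp (-n ^ 2) * Real.exp (n ^ 2)) := by ring
              _ = d ^ 2 := by rw [hh, mul_one]
          have h4 : n ^ 2 < L := (Real.lt_log_iff_exp_lt (by positivity)).2 h3
          have h5 : n ^ 2 < r ^ 2 := by rwa [hr_def, Real.sq_sqrt hL.le]
          exact Set.mem_Ioo.2 (abs_lt_of_sq_lt_sq' h5 hr.le)
        · rintro ⟨h1, h2⟩
          have h5 : n ^ 2 < r ^ 2 := sq_lt_sq' h1 h2
          have h4 : n ^ 2 < L := by rwa [hr_def, Real.sq_sqrt hL.le] at h5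
          have h3 : Real.exp (n ^ 2) * t < d ^ 2 := by
            have := (Real.lt_log_iff_exp_lt (x := n ^ 2) (y := d ^ 2 / t) (by positivity)).1 h4
            rwa [lt_div_iff₀ ht0] at this
          refine ⟨ht0, ?_⟩
          calc t = t * (Real.exp (-n ^ 2) * Real.exp (n ^ 2)) := by rw [hh, mul_one]
            _ = (Real.exp (n ^ 2) * t) * Real.exp (-n ^ 2) := by ring
            _ < d ^ 2 * Real.exp (-n ^ 2) := by
                exact mul_lt_mul_of_pos_right h3 (Real.exp_pos _)
      by_cases hn : n ∈ Set.Ioo (-r) r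
      · rw [Set.indicator_of_mem (hmem.2 hn), Set.indicator_of_mem hn]
        have hkey : gaussianPDF 0 1 n
            * ENNReal.ofReal (1 / (2 * Real.sqrt (d ^ 2 * Real.exp (-n ^ 2) * t))) = C := by
          rw [gaussianPDF_def, ← ENNReal.ofReal_mul (gaussianPDFReal_nonneg 0 1 n), hC_def]
          congr 1
          have hsq : Real.sqrt (d ^ 2 * Real.exp (-n ^ 2) * t)
              = d * Real.exp (-n ^ 2 / 2) * Real.sqrt t := by
            rw [Real.sqrt_mul (by positivity), Real.sqrt_mul (by positivity),
              Real.sqrt_sq hd.le, sqrt_exp']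
          rw [gaussianPDFReal, hsq]
          simp only [NNReal.coe_one, mul_one, sub_zero]
          have h2pi : (0:ℝ) < Real.sqrt (2 * Real.pi) := Real.sqrt_pos.2 (by positivity)
          have hst : (0:ℝ) < Real.sqrt t := Real.sqrt_pos.2 ht0
          have hexp : Real.exp (-n ^ 2 / 2) ≠ 0 := Real.exp_ne_zero _
          field_simp
        rw [← mul_assoc, hkey]
      · rw [Set.indicator_of_notMem (fun hc => hn (hmem.1 hc)), Set.indicator_of_notMem hn,
          mul_zero]
    calc ∫⁻ n, gaussianPDF 0 1 n *
          (Set.Ioo (0:ℝ) (d ^ 2 * Real.exp (-n ^ 2))).indicator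
            (fun t => ENNReal.ofReal (1 / (2 * Real.sqrt (d ^ 2 * Real.exp (-n ^ 2) * t))) * g t) t
        = ∫⁻ n, (Set.Ioo (-r) r).indicator (fun _ => C * g t) n := lintegral_congr hpt
      _ = C * g t * volume (Set.Ioo (-r) r) := by
          rw [lintegral_indicator measurableSet_Ioo, setLIntegral_const]
      _ = ENNReal.ofReal ((1 / (d * Real.sqrt (2 * Real.pi))) * Real.sqrt ((1 / t) * L)) * g t := by
          rw [Real.volume_Ioo]
          have h2r : r - -r = 2 * r := by ring
          rw [h2r, mul_right_comm, hC_def, ← ENNReal.ofReal_mul (by positivity)]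
          congr 2
          have hsL : Real.sqrt ((1 / t) * L) = (Real.sqrt t)⁻¹ * r := by
            rw [Real.sqrt_mul (by positivity), one_div, Real.sqrt_inv, hr_def]
          rw [hsL]
          have h2pi : (0:ℝ) < Real.sqrt (2 * Real.pi) := Real.sqrt_pos.2 (by positivity)
          have hst : (0:ℝ) < Real.sqrt t := Real.sqrt_pos.2 ht0
          field_simp
      _ = ENNReal.ofReal (if t ∈ Set.Ioo (0 : ℝ) (d ^ 2) then
            (1 / (d * Real.sqrt (2 * Real.pi))) * Real.sqrt ((1 / t) * Real.log (d ^ 2 / t))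
          else 0) * g t := by
          rw [if_pos (Set.mem_Ioo.2 ⟨ht0, htd⟩)]
  · have hzero : ∀ n : ℝ, t ∉ Set.Ioo (0:ℝ) (d ^ 2 * Real.exp (-n ^ 2)) := by
      intro n hc
      apply ht
      refine ⟨hc.1, lt_of_lt_of_le hc.2 ?_⟩
      have h1 : Real.exp (-n ^ 2) ≤ 1 := Real.exp_le_one_iff.2 (neg_nonpos.2 (sq_nonneg n))
      nlinarith [sq_nonneg d]
    simp only [fun n : ℝ => Set.indicator_of_notMem (hzero n)
      (fun t => ENNReal.ofReal (1 / (2 * Real.sqrt (d ^ 2 * Real.exp (-n ^ 2) * t))) * g t)]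
    rw [if_neg ht]
    simp

lemma key_map (d : ℝ) (hd : 0 < d) :
    Measure.map (fun p : ℝ × ℝ => d ^ 2 * p.1 ^ 2 * Real.exp (-p.2 ^ 2))
      ((volume.restrict (Set.Ioo (0:ℝ) 1)).prod (gaussianReal 0 1)) =
      volume.withDensity (fun t =>
        ENNReal.ofReal (if t ∈ Set.Ioo (0 : ℝ) (d ^ 2) then
          (1 / (d * Real.sqrt (2 * Real.pi))) * Real.sqrt ((1 / t) * Real.log (d ^ 2 / t))
        else 0)) := by
  set F : ℝ × ℝ → ℝ := fun p => d ^ 2 * p.1 ^ 2 * Real.exp (-p.2 ^ 2) with hF_def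
  have hF : Measurable F := by fun_prop
  ext s hs
  rw [Measure.map_apply hF hs, withDensity_apply _ hs]
  set g : ℝ → ℝ≥0∞ := s.indicator 1 with hg_def
  have hg : Measurable g := measurable_one.indicator hs
  set W : ℝ → ℝ → ℝ≥0∞ := fun n t =>
    (Set.Ioo (0:ℝ) (d ^ 2 * Real.exp (-n ^ 2))).indicator
      (fun t => ENNReal.ofReal (1 / (2 * Real.sqrt (d ^ 2 * Real.exp (-n ^ 2) * t))) * g t) t
    with hW_def
  have hWmeas : Measurable (fun p : ℝ × ℝ => W p.1 p.2) := by
    have hset : MeasurableSet {p : ℝ × ℝ | 0 < p.2 ∧ p.2 < d ^ 2 * Real.exp (-p.1 ^ 2)} := by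
      apply MeasurableSet.inter
      · exact measurableSet_lt measurable_const measurable_snd
      · exact measurableSet_lt measurable_snd (by fun_prop)
    have heq : (fun p : ℝ × ℝ => W p.1 p.2) =
        Set.indicator {p : ℝ × ℝ | 0 < p.2 ∧ p.2 < d ^ 2 * Real.exp (-p.1 ^ 2)}
          (fun p => ENNReal.ofReal (1 / (2 * Real.sqrt (d ^ 2 * Real.exp (-p.1 ^ 2) * p.2)))
            * g p.2) := by
      ext p
      simp only [hW_def, Set.indicator_apply, Set.mem_Ioo, Set.mem_setOf_eq]
    rw [heq]
    exact Measurable.indicator (by fun_prop) hset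
  have hWmeas' : Measurable (Function.uncurry W) := hWmeas
  have hgauss : Measurable (gaussianPDF 0 1) := measurable_gaussianPDF 0 1
  calc ((volume.restrict (Set.Ioo (0:ℝ) 1)).prod (gaussianReal 0 1)) (F ⁻¹' s)
      = ∫⁻ p, g (F p) ∂((volume.restrict (Set.Ioo (0:ℝ) 1)).prod (gaussianReal 0 1)) := by
        rw [← lintegral_indicator_one (hF hs)]
        refine lintegral_congr fun p => ?_
        by_cases hp : F p ∈ s <;> simp [hg_def, Set.indicator, hp]
    _ = ∫⁻ n, (∫⁻ u in Set.Ioo (0:ℝ) 1, g (F (u, n))) ∂(gaussianReal 0 1) :=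
        lintegral_prod_symm' _ (hg.comp hF)
    _ = ∫⁻ n, (∫⁻ t, W n t) ∂(gaussianReal 0 1) := by
        refine lintegral_congr fun n => ?_
        have hc : 0 < d ^ 2 * Real.exp (-n ^ 2) := by positivity
        have h1 : (fun u => g (F (u, n))) = fun u => g ((d ^ 2 * Real.exp (-n ^ 2)) * u ^ 2) := by
          funext u
          congr 1
          rw [hF_def]
          ring
        rw [h1, sq_substitution hc g, hW_def, ← lintegral_indicator measurableSet_Ioo]
    _ = ∫⁻ n, gaussianPDF 0 1 n * ∫⁻ t, W n t := by
        rw [gaussianReal_of_var_ne_zero 0 one_ne_zero,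
          lintegral_withDensity_eq_lintegral_mul _ hgauss (hWmeas'.lintegral_prod_right)]
        rfl
    _ = ∫⁻ n, ∫⁻ t, gaussianPDF 0 1 n * W n t := by
        refine lintegral_congr fun n => ?_
        rw [lintegral_const_mul' _ _ (by rw [gaussianPDF_def]; exact ENNReal.ofReal_ne_top)]
    _ = ∫⁻ t, ∫⁻ n, gaussianPDF 0 1 n * W n t := by
        refine lintegral_lintegral_swap ?_
        exact ((hgauss.comp measurable_fst).mul hWmeas).aemeasurable
    _ = ∫⁻ t, ENNReal.ofReal (if t ∈ Set.Ioo (0 : ℝ) (d ^ 2) then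
          (1 / (d * Real.sqrt (2 * Real.pi))) * Real.sqrt ((1 / t) * Real.log (d ^ 2 / t))
        else 0) * g t := lintegral_congr fun t => slice_integral d hd g t
    _ = ∫⁻ t in s, ENNReal.ofReal (if t ∈ Set.Ioo (0 : ℝ) (d ^ 2) then
          (1 / (d * Real.sqrt (2 * Real.pi))) * Real.sqrt ((1 / t) * Real.log (d ^ 2 / t))
        else 0) := by
        rw [← lintegral_indicator hs]
        refine lintegral_congr fun t => ?_
        rw [hg_def]
        by_cases hts : t ∈ s
        · rw [Set.indicator_of_mem hts, Set.indicator_of_mem hts]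
          simp
        · rw [Set.indicator_of_notMem hts, Set.indicator_of_notMem hts, mul_zero]

/-- If `U` is uniform on `(0,1)`, `N` is standard Gaussian, and `U, N` are independent,
then the law of `d²·U²·exp(−N²)` has density
`p(t) = (1/(d√(2π)))·√((1/t)·log(d²/t))` on `(0, d²)` (and `0` outside) with respect to
Lebesgue measure. -/
theorem exit_time_simulation (d : ℝ) (hd : 0 < d)
    {Ω : Type*} [MeasurableSpace Ω] (μ : Measure Ω) [IsProbabilityMeasure μ]
    (U N : Ω → ℝ) (hUmeas : Measurable U) (hNmeas : Measurable N)
    (hU : μ.map U = volume.restrict (Set.Ioo (0 : ℝ) 1))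
    (hN : μ.map N = gaussianReal 0 1)
    (hindep : IndepFun U N μ) :
    μ.map (fun ω => d ^ 2 * (U ω) ^ 2 * Real.exp (-(N ω) ^ 2)) =
      volume.withDensity (fun t =>
        ENNReal.ofReal (if t ∈ Set.Ioo (0 : ℝ) (d ^ 2) then
          (1 / (d * Real.sqrt (2 * Real.pi))) * Real.sqrt ((1 / t) * Real.log (d ^ 2 / t))
        else 0)) := by
  have hpair : μ.map (fun ω => (U ω, N ω)) =
      (volume.restrict (Set.Ioo (0:ℝ) 1)).prod (gaussianReal 0 1) := by
    rw [← hU, ← hN]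
    exact (indepFun_iff_map_prod_eq_prod_map_map hUmeas.aemeasurable
      hNmeas.aemeasurable).1 hindep
  have hF : Measurable (fun p : ℝ × ℝ => d ^ 2 * p.1 ^ 2 * Real.exp (-p.2 ^ 2)) := by fun_prop
  have hcomp : (fun ω => d ^ 2 * (U ω) ^ 2 * Real.exp (-(N ω) ^ 2)) =
      (fun p : ℝ × ℝ => d ^ 2 * p.1 ^ 2 * Real.exp (-p.2 ^ 2)) ∘ (fun ω => (U ω, N ω)) := rfl
  rw [hcomp, ← Measure.map_map hF (hUmeas.prodMk hNmeas), hpair, key_map d hd]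
end

section
/- Let t₀ ≥ 0, x₀ ∈ ℝ, m > 0 and d > 0 satisfy d² ≤ ρ(t₀+m) − ρ(t₀). Then for every t ∈ [0, m] with ρ(t+t₀) − ρ(t₀) ≤ d², the upper spheroid boundary satisfies ψ₊^L(t; t₀, x₀) ≤ x₀ + d·Δ_m. -/
open MeasureTheory intervalIntegral

/-- `θ(t) = −∫₀ᵗ α(s) ds`. -/
noncomputable def thetaL (α : ℝ → ℝ) (t : ℝ) : ℝ := -∫ s in (0 : ℝ)..t, α s

/-- `c(t) = e^{−θ(t)} ∫₀ᵗ β(s) e^{θ(s)} ds`. -/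
noncomputable def cL (α β : ℝ → ℝ) (t : ℝ) : ℝ :=
  Real.exp (-(thetaL α t)) * ∫ s in (0 : ℝ)..t, β s * Real.exp (thetaL α s)

/-- `ρ(t) = ∫₀ᵗ σ̃(s)² e^{2θ(s)} ds`. -/
noncomputable def rhoL (α σ : ℝ → ℝ) (t : ℝ) : ℝ :=
  ∫ s in (0 : ℝ)..t, (σ s) ^ 2 * Real.exp (2 * thetaL α s)

/-- Brownian spheroid upper boundary `ψ₊(u) = √(u·log(d²/u))`. -/
noncomputable def psiPlus (d u : ℝ) : ℝ := Real.sqrt (u * Real.log (d ^ 2 / u))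

/-- Upper boundary of the spheroid associated to the L-class diffusion started at `(t₀, x₀)`. -/
noncomputable def psiPlusL (α β σ : ℝ → ℝ) (d t₀ x₀ t : ℝ) : ℝ :=
  Real.exp (-(thetaL α (t + t₀))) * psiPlus d (rhoL α σ (t + t₀) - rhoL α σ t₀)
    + cL α β (t + t₀) + (x₀ - cL α β t₀) * Real.exp (∫ s in t₀..(t + t₀), α s)

/-- The constant `Δ_m`. -/
noncomputable def deltaM (α β σ : ℝ → ℝ) (t₀ x₀ m : ℝ) : ℝ :=
  Real.exp (-(thetaL α t₀)) * Real.exp (∫ s in t₀..(t₀ + m), |α s|) *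
    (1 / Real.sqrt (Real.exp 1) +
      Real.sqrt (∫ s in t₀..(t₀ + m), |β s + x₀ * α s| ^ 2 / (σ s) ^ 2))

lemma psiPlus_le_aux {d u : ℝ} (hd : 0 < d) (hu : 0 ≤ u) (hud : u ≤ d ^ 2) :
    psiPlus d u ≤ d * (1 / Real.sqrt (Real.exp 1)) := by
  have he : (0:ℝ) < Real.exp 1 := Real.exp_pos 1
  have key : u * Real.log (d ^ 2 / u) ≤ d ^ 2 / Real.exp 1 := by
    rcases eq_or_lt_of_le hu with h | h
    · rw [← h]
      simp only [zero_mul]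
      positivity
    · have hy : 0 < d ^ 2 / u := by positivity
      have hlog : Real.log (d ^ 2 / u) ≤ (d ^ 2 / u) / Real.exp 1 := by
        have h2 := Real.log_le_sub_one_of_pos (show 0 < (d ^ 2 / u) / Real.exp 1 by positivity)
        rw [Real.log_div (ne_of_gt hy) (ne_of_gt he), Real.log_exp] at h2
        linarith
      calc u * Real.log (d ^ 2 / u) ≤ u * ((d ^ 2 / u) / Real.exp 1) :=
            mul_le_mul_of_nonneg_left hlog hu
        _ = d ^ 2 / Real.exp 1 := by field_simp
  have h1 : psiPlus d u ≤ Real.sqrt (d ^ 2 / Real.exp 1) := Real.sqrt_le_sqrt key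
  rwa [Real.sqrt_div (by positivity) (Real.exp 1), Real.sqrt_sq hd.le, div_eq_mul_inv,
    ← one_div] at h1

/-- If `d² ≤ ρ(t₀+m) − ρ(t₀)`, then for every `t ∈ [0, m]` with
`ρ(t+t₀) − ρ(t₀) ≤ d²` the upper spheroid boundary satisfies
`ψ₊^L(t; t₀, x₀) ≤ x₀ + d·Δ_m`. -/
theorem psiPlusL_upper_bound (α β σ : ℝ → ℝ)
    (hα : ContinuousOn α (Set.Ici 0)) (hβ : ContinuousOn β (Set.Ici 0))
    (hσ : ContinuousOn σ (Set.Ici 0)) (hσpos : ∀ t ∈ Set.Ici (0 : ℝ), 0 < σ t)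
    (t₀ x₀ m d : ℝ) (ht₀ : 0 ≤ t₀) (hm : 0 < m) (hd : 0 < d)
    (hd2 : d ^ 2 ≤ rhoL α σ (t₀ + m) - rhoL α σ t₀) :
    ∀ t ∈ Set.Icc (0 : ℝ) m, rhoL α σ (t + t₀) - rhoL α σ t₀ ≤ d ^ 2 →
      psiPlusL α β σ d t₀ x₀ t ≤ x₀ + d * deltaM α β σ t₀ x₀ m := by
  intro t ht hu
  obtain ⟨ht0, htm⟩ := ht
  set b := t + t₀ with hbdef
  set T := t₀ + m with hTdef
  have ht₀b : t₀ ≤ b := by rw [hbdef]; linarith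
  have hb0 : (0:ℝ) ≤ b := le_trans ht₀ ht₀b
  have hbT : b ≤ T := by rw [hbdef, hTdef]; linarith
  have h0T : (0:ℝ) ≤ T := by linarith
  have hsub : Set.Icc (0:ℝ) T ⊆ Set.Ici 0 := fun x hx => hx.1
  -- memberships
  have m0 : (0:ℝ) ∈ Set.Icc (0:ℝ) T := ⟨le_refl 0, h0T⟩
  have mt₀ : t₀ ∈ Set.Icc (0:ℝ) T := ⟨ht₀, by linarith⟩
  have mb : b ∈ Set.Icc (0:ℝ) T := ⟨hb0, hbT⟩
  have mT : T ∈ Set.Icc (0:ℝ) T := ⟨h0T, le_refl T⟩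
  -- continuity on Icc 0 T
  have hαT : ContinuousOn α (Set.Icc 0 T) := hα.mono hsub
  have hβT : ContinuousOn β (Set.Icc 0 T) := hβ.mono hsub
  have hσT : ContinuousOn σ (Set.Icc 0 T) := hσ.mono hsub
  have hσne : ∀ s ∈ Set.Icc (0:ℝ) T, σ s ≠ 0 := fun s hs => (hσpos s (hsub hs)).ne'
  -- interval integrability helper
  have key : ∀ f : ℝ → ℝ, ContinuousOn f (Set.Icc 0 T) →
      ∀ p q : ℝ, p ∈ Set.Icc (0:ℝ) T → q ∈ Set.Icc (0:ℝ) T →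
      IntervalIntegrable f volume p q := by
    intro f hf p q hp hq
    apply ContinuousOn.intervalIntegrable
    apply hf.mono
    rw [show Set.Icc (0:ℝ) T = Set.uIcc (0:ℝ) T from (Set.uIcc_of_le h0T).symm]
    exact Set.uIcc_subset_uIcc (by rwa [Set.uIcc_of_le h0T]) (by rwa [Set.uIcc_of_le h0T])
  -- continuity of theta
  have hθT : ContinuousOn (thetaL α) (Set.Icc 0 T) := by
    have hint : IntegrableOn α (Set.uIcc 0 T) volume := by
      rw [Set.uIcc_of_le h0T]; exact hαT.integrableOn_Icc
    have h2 := (intervalIntegral.continuousOn_primitive_interval hint).neg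
    rw [Set.uIcc_of_le h0T] at h2
    exact h2
  have hE : ContinuousOn (fun s => Real.exp (thetaL α s)) (Set.Icc 0 T) :=
    Real.continuous_exp.comp_continuousOn hθT
  have hβE : ContinuousOn (fun s => β s * Real.exp (thetaL α s)) (Set.Icc 0 T) := hβT.mul hE
  have hαE : ContinuousOn (fun s => α s * Real.exp (thetaL α s)) (Set.Icc 0 T) := hαT.mul hE
  have hhE : ContinuousOn (fun s => (β s + x₀ * α s) * Real.exp (thetaL α s)) (Set.Icc 0 T) :=
    (hβT.add (continuousOn_const.mul hαT)).mul hE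
  have habs : ContinuousOn (fun s => |β s + x₀ * α s|) (Set.Icc 0 T) :=
    (hβT.add (continuousOn_const.mul hαT)).abs
  have hfq : ContinuousOn (fun s => |β s + x₀ * α s| / σ s) (Set.Icc 0 T) :=
    habs.div hσT hσne
  have hgq : ContinuousOn (fun s => σ s * Real.exp (thetaL α s)) (Set.Icc 0 T) := hσT.mul hE
  have hρc : ContinuousOn (fun s => σ s ^ 2 * Real.exp (2 * thetaL α s)) (Set.Icc 0 T) :=
    (hσT.pow 2).mul (Real.continuous_exp.comp_continuousOn (continuousOn_const.mul hθT))
  have hKc : ContinuousOn (fun s => |β s + x₀ * α s| ^ 2 / σ s ^ 2) (Set.Icc 0 T) :=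
    (habs.pow 2).div (hσT.pow 2) (fun s hs => pow_ne_zero 2 (hσne s hs))
  -- Identity A
  have hA : ∫ s in t₀..b, α s = thetaL α t₀ - thetaL α b := by
    have h1 := integral_add_adjacent_intervals (key α hαT 0 t₀ m0 mt₀) (key α hαT t₀ b mt₀ mb)
    simp only [thetaL]
    linarith
  -- Identity C (FTC)
  have hC : ∫ s in t₀..b, α s * Real.exp (thetaL α s)
      = Real.exp (thetaL α t₀) - Real.exp (thetaL α b) := by
    have hderiv : ∀ x ∈ Set.Ioo t₀ b,
        HasDerivWithinAt (fun s => -Real.exp (thetaL α s))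
          (α x * Real.exp (thetaL α x)) (Set.Ioi x) x := by
      intro x hx
      have hx0 : (0:ℝ) < x := lt_of_le_of_lt ht₀ hx.1
      have hmeas : StronglyMeasurableAtFilter α (nhds x) volume :=
        ContinuousOn.stronglyMeasurableAtFilter isOpen_Ioi
          (hα.mono Set.Ioi_subset_Ici_self) x hx0
      have hca : ContinuousAt α x := hα.continuousAt (Ici_mem_nhds hx0)
      have hint : IntervalIntegrable α volume 0 x :=
        key α hαT 0 x m0 ⟨hx0.le, le_trans hx.2.le hbT⟩
      have h1 : HasDerivAt (fun u => ∫ s in (0:ℝ)..u, α s) (α x) x :=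
        intervalIntegral.integral_hasDerivAt_right hint hmeas hca
      have h2 : HasDerivAt (thetaL α) (-(α x)) x := h1.neg
      have h3 := (h2.exp).neg
      have h4 : HasDerivAt (fun s => -Real.exp (thetaL α s))
          (α x * Real.exp (thetaL α x)) x := by
        have h5 : HasDerivAt (fun s => -Real.exp (thetaL α s))
            (-(Real.exp (thetaL α x) * -α x)) x := h3
        rw [show α x * Real.exp (thetaL α x) = -(Real.exp (thetaL α x) * -α x) by ring]
        exact h5
      exact h4.hasDerivWithinAt
    have hcont : ContinuousOn (fun s => -Real.exp (thetaL α s)) (Set.Icc t₀ b) :=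
      (hE.mono (Set.Icc_subset_Icc ht₀ hbT)).neg
    have hint : IntervalIntegrable (fun s => α s * Real.exp (thetaL α s)) volume t₀ b :=
      key _ hαE t₀ b mt₀ mb
    have h5 := intervalIntegral.integral_eq_sub_of_hasDeriv_right_of_le ht₀b hcont hderiv hint
    rw [h5]
    ring
  -- splitting the β e^θ integral
  have hBsplit : ∫ s in t₀..b, β s * Real.exp (thetaL α s)
      = (∫ s in (0:ℝ)..b, β s * Real.exp (thetaL α s))
        - ∫ s in (0:ℝ)..t₀, β s * Real.exp (thetaL α s) := by
    have h1 := integral_add_adjacent_intervals (key _ hβE 0 t₀ m0 mt₀) (key _ hβE t₀ b mt₀ mb)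
    linarith
  -- rho differences
  have hrho : rhoL α σ b - rhoL α σ t₀
      = ∫ s in t₀..b, σ s ^ 2 * Real.exp (2 * thetaL α s) := by
    have h1 := integral_add_adjacent_intervals (key _ hρc 0 t₀ m0 mt₀) (key _ hρc t₀ b mt₀ mb)
    simp only [rhoL]
    linarith
  have hu0 : 0 ≤ rhoL α σ b - rhoL α σ t₀ := by
    rw [hrho]
    apply intervalIntegral.integral_nonneg ht₀b
    intro s hs
    positivity
  -- linearity split
  have hsplit : ∫ s in t₀..b, (β s + x₀ * α s) * Real.exp (thetaL α s)
      = (∫ s in t₀..b, β s * Real.exp (thetaL α s))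
        + x₀ * ∫ s in t₀..b, α s * Real.exp (thetaL α s) := by
    rw [← intervalIntegral.integral_const_mul,
      ← intervalIntegral.integral_add (key _ hβE t₀ b mt₀ mb)
        ((key _ hαE t₀ b mt₀ mb).const_mul x₀)]
    congr 1
    ext s
    ring
  -- the main algebraic identity
  set ψ := psiPlus d (rhoL α σ b - rhoL α σ t₀) with hψdef
  set J := ∫ s in t₀..b, (β s + x₀ * α s) * Real.exp (thetaL α s) with hJdef
  have heq : psiPlusL α β σ d t₀ x₀ t = x₀ + Real.exp (-(thetaL α b)) * (ψ + J) := by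
    rw [hsplit, hC, hBsplit]
    simp only [psiPlusL, cL, ← hbdef, hA, ← hψdef]
    rw [Real.exp_sub, Real.exp_neg, Real.exp_neg]
    field_simp
    ring
  rw [heq]
  -- bounds
  have hψle : ψ ≤ d * (1 / Real.sqrt (Real.exp 1)) := psiPlus_le_aux hd hu0 hu
  set K := ∫ s in t₀..T, |β s + x₀ * α s| ^ 2 / σ s ^ 2 with hKdef
  have hK0 : 0 ≤ K := by
    rw [hKdef]
    apply intervalIntegral.integral_nonneg (by linarith)
    intro s hs
    positivity
  have hJle : J ≤ d * Real.sqrt K := by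
    have step1 : J ≤ ∫ s in t₀..b, |β s + x₀ * α s| * Real.exp (thetaL α s) := by
      apply intervalIntegral.integral_mono_on ht₀b (key _ hhE t₀ b mt₀ mb)
        (key _ (habs.mul hE) t₀ b mt₀ mb)
      intro s _
      exact mul_le_mul_of_nonneg_right (le_abs_self _) (Real.exp_nonneg _)
    have step2 : ∫ s in t₀..b, |β s + x₀ * α s| * Real.exp (thetaL α s)
        ≤ Real.sqrt (∫ s in t₀..b, |β s + x₀ * α s| ^ 2 / σ s ^ 2)
          * Real.sqrt (∫ s in t₀..b, σ s ^ 2 * Real.exp (2 * thetaL α s)) := by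
      have hIcc : Set.Ioc t₀ b ⊆ Set.Icc (0:ℝ) T :=
        fun s hs => ⟨le_trans ht₀ hs.1.le, le_trans hs.2 hbT⟩
      set μ := volume.restrict (Set.Ioc t₀ b) with hμdef
      have hae : ∀ᵐ s ∂μ, s ∈ Set.Ioc t₀ b := ae_restrict_mem measurableSet_Ioc
      have hpq : Real.HolderConjugate 2 2 := ⟨by norm_num, by norm_num, by norm_num⟩
      have hmemf : MemLp (fun s => |β s + x₀ * α s| / σ s) (ENNReal.ofReal 2) μ := by
        rw [show ENNReal.ofReal 2 = 2 by norm_num]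
        rw [memLp_two_iff_integrable_sq]
        · have : IntegrableOn (fun s => (|β s + x₀ * α s| / σ s) ^ 2) (Set.Ioc t₀ b) volume := by
            apply IntegrableOn.mono_set _ hIcc
            exact ((hfq.pow 2).integrableOn_Icc)
          exact this
        · exact ((hfq.mono hIcc).aestronglyMeasurable measurableSet_Ioc)
      have hmemg : MemLp (fun s => σ s * Real.exp (thetaL α s)) (ENNReal.ofReal 2) μ := by
        rw [show ENNReal.ofReal 2 = 2 by norm_num]
        rw [memLp_two_iff_integrable_sq]
        · have : IntegrableOn (fun s => (σ s * Real.exp (thetaL α s)) ^ 2)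
              (Set.Ioc t₀ b) volume := by
            apply IntegrableOn.mono_set _ hIcc
            exact ((hgq.pow 2).integrableOn_Icc)
          exact this
        · exact ((hgq.mono hIcc).aestronglyMeasurable measurableSet_Ioc)
      have hfnn : 0 ≤ᵐ[μ] fun s => |β s + x₀ * α s| / σ s := by
        filter_upwards [hae] with s hs
        exact div_nonneg (abs_nonneg _) (hσpos s (hsub (hIcc hs))).le
      have hgnn : 0 ≤ᵐ[μ] fun s => σ s * Real.exp (thetaL α s) := by
        filter_upwards [hae] with s hs
        exact mul_nonneg (hσpos s (hsub (hIcc hs))).le (Real.exp_nonneg _)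
      have hcs := integral_mul_le_Lp_mul_Lq_of_nonneg hpq hfnn hgnn hmemf hmemg
      -- rewrite product
      have hprod : ∫ s, (|β s + x₀ * α s| / σ s) * (σ s * Real.exp (thetaL α s)) ∂μ
          = ∫ s in t₀..b, |β s + x₀ * α s| * Real.exp (thetaL α s) := by
        rw [intervalIntegral.integral_of_le ht₀b]
        apply setIntegral_congr_fun measurableSet_Ioc
        intro s hs
        have hσs : σ s ≠ 0 := hσne s (hIcc hs)
        field_simp
      have hf2 : ∫ s, (|β s + x₀ * α s| / σ s) ^ (2:ℝ) ∂μ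
          = ∫ s in t₀..b, |β s + x₀ * α s| ^ 2 / σ s ^ 2 := by
        rw [intervalIntegral.integral_of_le ht₀b]
        apply setIntegral_congr_fun measurableSet_Ioc
        intro s hs
        have h2c : ((2:ℝ)) = ((2:ℕ):ℝ) := by norm_num
        simp only [h2c, Real.rpow_natCast]
        rw [div_pow]
      have hg2 : ∫ s, (σ s * Real.exp (thetaL α s)) ^ (2:ℝ) ∂μ
          = ∫ s in t₀..b, σ s ^ 2 * Real.exp (2 * thetaL α s) := by
        rw [intervalIntegral.integral_of_le ht₀b]
        apply setIntegral_congr_fun measurableSet_Ioc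
        intro s hs
        have h2c : ((2:ℝ)) = ((2:ℕ):ℝ) := by norm_num
        simp only [h2c, Real.rpow_natCast]
        rw [mul_pow, ← Real.exp_nat_mul]
      rw [hprod, hf2, hg2, ← Real.sqrt_eq_rpow, ← Real.sqrt_eq_rpow] at hcs
      exact hcs
    have step3 : ∫ s in t₀..b, |β s + x₀ * α s| ^ 2 / σ s ^ 2 ≤ K := by
      rw [hKdef]
      apply intervalIntegral.integral_mono_interval le_rfl ht₀b hbT
      · filter_upwards with s
        positivity
      · exact key _ hKc t₀ T mt₀ mT
    have step4 : Real.sqrt (∫ s in t₀..b, |β s + x₀ * α s| ^ 2 / σ s ^ 2) ≤ Real.sqrt K :=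
      Real.sqrt_le_sqrt step3
    have step5 : Real.sqrt (∫ s in t₀..b, σ s ^ 2 * Real.exp (2 * thetaL α s)) ≤ d := by
      rw [← hrho]
      calc Real.sqrt (rhoL α σ b - rhoL α σ t₀) ≤ Real.sqrt (d ^ 2) := Real.sqrt_le_sqrt hu
        _ = d := Real.sqrt_sq hd.le
    calc J ≤ ∫ s in t₀..b, |β s + x₀ * α s| * Real.exp (thetaL α s) := step1
      _ ≤ Real.sqrt (∫ s in t₀..b, |β s + x₀ * α s| ^ 2 / σ s ^ 2)
          * Real.sqrt (∫ s in t₀..b, σ s ^ 2 * Real.exp (2 * thetaL α s)) := step2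
      _ ≤ Real.sqrt K * d := by
          apply mul_le_mul step4 step5 (Real.sqrt_nonneg _) (Real.sqrt_nonneg _)
      _ = d * Real.sqrt K := mul_comm _ _
  -- exponential bound
  have hexp : Real.exp (-(thetaL α b))
      ≤ Real.exp (-(thetaL α t₀)) * Real.exp (∫ s in t₀..T, |α s|) := by
    rw [← Real.exp_add]
    apply Real.exp_le_exp.mpr
    have h1 : ∫ s in t₀..b, α s ≤ ∫ s in t₀..b, |α s| := by
      apply intervalIntegral.integral_mono_on ht₀b (key α hαT t₀ b mt₀ mb)
        (key _ hαT.abs t₀ b mt₀ mb)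
      intro s _
      exact le_abs_self _
    have h2 : ∫ s in t₀..b, |α s| ≤ ∫ s in t₀..T, |α s| := by
      apply intervalIntegral.integral_mono_interval le_rfl ht₀b hbT
      · filter_upwards with s
        exact abs_nonneg _
      · exact key _ hαT.abs t₀ T mt₀ mT
    linarith
  -- conclusion
  have hfinal : Real.exp (-(thetaL α b)) * (ψ + J) ≤ d * deltaM α β σ t₀ x₀ m := by
    calc Real.exp (-(thetaL α b)) * (ψ + J)
        ≤ Real.exp (-(thetaL α b)) * (d * (1 / Real.sqrt (Real.exp 1)) + d * Real.sqrt K) :=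
          mul_le_mul_of_nonneg_left (add_le_add hψle hJle) (Real.exp_nonneg _)
      _ = d * (Real.exp (-(thetaL α b)) * (1 / Real.sqrt (Real.exp 1) + Real.sqrt K)) := by ring
      _ ≤ d * (Real.exp (-(thetaL α t₀)) * Real.exp (∫ s in t₀..T, |α s|)
            * (1 / Real.sqrt (Real.exp 1) + Real.sqrt K)) := by
          apply mul_le_mul_of_nonneg_left _ hd.le
          apply mul_le_mul_of_nonneg_right hexp
          have : 0 ≤ Real.sqrt K := Real.sqrt_nonneg _
          positivity
      _ = d * deltaM α β σ t₀ x₀ m := by rw [deltaM, ← hTdef, ← hKdef]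
  linarith
end

section
/- Let t₀ ≥ 0, x₀ ∈ ℝ, m > 0 and d > 0 satisfy d² ≤ ρ(t₀+m) − ρ(t₀). Then for every t ∈ [0, m] with ρ(t+t₀) − ρ(t₀) ≤ d², the lower spheroid boundary satisfies ψ₋^L(t; t₀, x₀) ≥ x₀ − d·Δ_m. -/
open MeasureTheory intervalIntegral

/-- Brownian spheroid lower boundary `ψ₋(u) = −√(u·log(d²/u))`. -/
noncomputable def psiMinus (d u : ℝ) : ℝ := -Real.sqrt (u * Real.log (d ^ 2 / u))

/-- Lower boundary of the spheroid associated to the L-class diffusion started at `(t₀, x₀)`. -/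
noncomputable def psiMinusL (α β σ : ℝ → ℝ) (d t₀ x₀ t : ℝ) : ℝ :=
  Real.exp (-(thetaL α (t + t₀))) * psiMinus d (rhoL α σ (t + t₀) - rhoL α σ t₀)
    + cL α β (t + t₀) + (x₀ - cL α β t₀) * Real.exp (∫ s in t₀..(t + t₀), α s)

lemma cs_aux (f g : ℝ → ℝ) (hf : Continuous f) (hg : Continuous g)
    (hgpos : ∀ s, 0 < g s) (a b : ℝ) (hab : a ≤ b) :
    |∫ s in a..b, f s * g s| ≤
      Real.sqrt (∫ s in a..b, f s ^ 2) * Real.sqrt (∫ s in a..b, g s ^ 2) := by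
  rcases eq_or_lt_of_le hab with rfl | hlt
  · simp
  set A := ∫ s in a..b, f s ^ 2 with hA
  set B := ∫ s in a..b, g s ^ 2 with hB
  set C := ∫ s in a..b, f s * g s with hC
  have hA0 : 0 ≤ A := intervalIntegral.integral_nonneg hab (fun s _ => sq_nonneg _)
  have hB0 : 0 < B :=
    intervalIntegral.intervalIntegral_pos_of_pos_on ((hg.pow 2).intervalIntegrable a b)
      (fun s _ => pow_pos (hgpos s) 2) hlt
  have h1 : (0:ℝ) ≤ ∫ s in a..b, (B * f s - C * g s) ^ 2 :=
    intervalIntegral.integral_nonneg hab (fun s _ => sq_nonneg _)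
  have h2 : (∫ s in a..b, (B * f s - C * g s) ^ 2)
      = B ^ 2 * A - 2 * B * C * C + C ^ 2 * B := by
    have e1 : ∀ s, (B * f s - C * g s) ^ 2
        = B ^ 2 * f s ^ 2 - 2 * B * C * (f s * g s) + C ^ 2 * g s ^ 2 := fun s => by ring
    simp_rw [e1]
    have i1 : IntervalIntegrable (fun s => B ^ 2 * f s ^ 2) volume a b :=
      (continuous_const.mul (hf.pow 2)).intervalIntegrable a b
    have i2 : IntervalIntegrable (fun s => 2 * B * C * (f s * g s)) volume a b :=
      (continuous_const.mul (hf.mul hg)).intervalIntegrable a b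
    have i3 : IntervalIntegrable (fun s => C ^ 2 * g s ^ 2) volume a b :=
      (continuous_const.mul (hg.pow 2)).intervalIntegrable a b
    rw [intervalIntegral.integral_add (i1.sub i2) i3, intervalIntegral.integral_sub i1 i2,
      intervalIntegral.integral_const_mul, intervalIntegral.integral_const_mul,
      intervalIntegral.integral_const_mul]
  have hCsq : C ^ 2 ≤ A * B := by nlinarith [h1, h2]
  calc |C| = Real.sqrt (C ^ 2) := (Real.sqrt_sq_eq_abs C).symm
    _ ≤ Real.sqrt (A * B) := Real.sqrt_le_sqrt hCsq
    _ = Real.sqrt A * Real.sqrt B := Real.sqrt_mul hA0 B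

lemma psiMinus_ge (d u : ℝ) (hd : 0 < d) (hu0 : 0 ≤ u) (hud : u ≤ d ^ 2) :
    -(d / Real.sqrt (Real.exp 1)) ≤ psiMinus d u := by
  rw [psiMinus, neg_le_neg_iff]
  rcases hu0.eq_or_lt with rfl | hu
  · simp [Real.sqrt_nonneg, div_nonneg hd.le (Real.sqrt_nonneg _)]
  have hlog : Real.log (d ^ 2 / u) ≤ (d ^ 2 / u) / Real.exp 1 := by
    have hx : 0 < d ^ 2 / u := div_pos (pow_pos hd 2) hu
    have h := Real.log_le_sub_one_of_pos (show 0 < d ^ 2 / u / Real.exp 1 from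
      div_pos hx (Real.exp_pos 1))
    rw [Real.log_div hx.ne' (Real.exp_pos 1).ne', Real.log_exp] at h
    linarith
  have hmul : u * Real.log (d ^ 2 / u) ≤ d ^ 2 / Real.exp 1 := by
    calc u * Real.log (d ^ 2 / u) ≤ u * ((d ^ 2 / u) / Real.exp 1) :=
          mul_le_mul_of_nonneg_left hlog hu.le
      _ = d ^ 2 / Real.exp 1 := by field_simp
  calc Real.sqrt (u * Real.log (d ^ 2 / u)) ≤ Real.sqrt (d ^ 2 / Real.exp 1) :=
        Real.sqrt_le_sqrt hmul
    _ = d / Real.sqrt (Real.exp 1) := by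
        rw [show d ^ 2 / Real.exp 1 = d ^ 2 * (Real.exp 1)⁻¹ by ring, Real.sqrt_mul (sq_nonneg d),
          Real.sqrt_sq hd.le, Real.sqrt_inv, div_eq_mul_inv]

lemma integral_congr_Ici {f g : ℝ → ℝ} {a b : ℝ} (ha : 0 ≤ a) (hab : a ≤ b)
    (h : ∀ s, 0 ≤ s → f s = g s) :
    (∫ s in a..b, f s) = ∫ s in a..b, g s := by
  apply intervalIntegral.integral_congr
  intro s hs
  rw [Set.uIcc_of_le hab] at hs
  exact h s (le_trans ha hs.1)

/-- If `d² ≤ ρ(t₀+m) − ρ(t₀)`, then for every `t ∈ [0, m]` with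
`ρ(t+t₀) − ρ(t₀) ≤ d²` the lower spheroid boundary satisfies
`ψ₋^L(t; t₀, x₀) ≥ x₀ − d·Δ_m`. -/
theorem psiMinusL_lower_bound (α β σ : ℝ → ℝ)
    (hα : ContinuousOn α (Set.Ici 0)) (hβ : ContinuousOn β (Set.Ici 0))
    (hσ : ContinuousOn σ (Set.Ici 0)) (hσpos : ∀ t ∈ Set.Ici (0 : ℝ), 0 < σ t)
    (t₀ x₀ m d : ℝ) (ht₀ : 0 ≤ t₀) (hm : 0 < m) (hd : 0 < d)
    (hd2 : d ^ 2 ≤ rhoL α σ (t₀ + m) - rhoL α σ t₀) :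
    ∀ t ∈ Set.Icc (0 : ℝ) m, rhoL α σ (t + t₀) - rhoL α σ t₀ ≤ d ^ 2 →
      x₀ - d * deltaM α β σ t₀ x₀ m ≤ psiMinusL α β σ d t₀ x₀ t := by
  intro t ht hud
  obtain ⟨ht0, htm⟩ := ht
  -- bar versions, continuous on all of ℝ
  have hq : Continuous (fun s : ℝ => max s 0) := continuous_id.max continuous_const
  have hqm : ∀ s : ℝ, max s 0 ∈ Set.Ici (0:ℝ) := fun s => le_max_right s 0
  set αb : ℝ → ℝ := (fun s => α (max s 0)) with hαbdef
  set βb : ℝ → ℝ := (fun s => β (max s 0)) with hβbdef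
  set σb : ℝ → ℝ := (fun s => σ (max s 0)) with hσbdef
  have hαb : Continuous αb := hα.comp_continuous hq hqm
  have hβb : Continuous βb := hβ.comp_continuous hq hqm
  have hσb : Continuous σb := hσ.comp_continuous hq hqm
  have hσbpos : ∀ s, 0 < σb s := fun s => hσpos _ (hqm s)
  have hαeq : ∀ s, 0 ≤ s → αb s = α s := fun s hs => by
    simp only [hαbdef, max_eq_left hs]
  have hβeq : ∀ s, 0 ≤ s → βb s = β s := fun s hs => by
    simp only [hβbdef, max_eq_left hs]
  have hσeq : ∀ s, 0 ≤ s → σb s = σ s := fun s hs => by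
    simp only [hσbdef, max_eq_left hs]
  set T := t + t₀ with hTdef
  have hT0 : (0:ℝ) ≤ T := by simp only [hTdef]; linarith
  have ht₀T : t₀ ≤ T := by simp only [hTdef]; linarith
  have hTm : T ≤ t₀ + m := by simp only [hTdef]; linarith
  have hIab : ∀ (f : ℝ → ℝ), Continuous f → ∀ a b : ℝ, IntervalIntegrable f volume a b :=
    fun f hf a b => hf.intervalIntegrable a b
  set θb : ℝ → ℝ := (fun u => -∫ s in (0:ℝ)..u, αb s) with hθbdef
  have hθcont : Continuous θb :=
    (intervalIntegral.continuous_primitive (fun a b => hαb.intervalIntegrable a b) 0).neg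
  set E : ℝ → ℝ := (fun s => Real.exp (θb s)) with hEdef
  have hE : Continuous E := Real.continuous_exp.comp hθcont
  have hEpos : ∀ s, 0 < E s := fun s => Real.exp_pos _
  have hθeq : ∀ s, 0 ≤ s → thetaL α s = θb s := by
    intro s hs
    simp only [thetaL, hθbdef, neg_inj]
    exact integral_congr_Ici le_rfl hs (fun x hx => (hαeq x hx).symm)
  -- FTC facts
  have hθd : ∀ s, HasDerivAt θb (-αb s) s := by
    intro s
    have hmeas : StronglyMeasurableAtFilter αb (nhds s) volume :=
      hαb.stronglyMeasurable.stronglyMeasurableAtFilter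
    exact (intervalIntegral.integral_hasDerivAt_right (hαb.intervalIntegrable 0 s)
      hmeas hαb.continuousAt).neg
  have hEd : ∀ s, HasDerivAt E (E s * -αb s) s := fun s => (hθd s).exp
  have hEsub : (∫ s in t₀..T, αb s * E s) = E t₀ - E T := by
    have hder : ∀ s ∈ Set.uIcc t₀ T, HasDerivAt (fun x => -E x) (αb s * E s) s := by
      intro s _
      have h := (hEd s).neg
      exact h.congr_deriv (by ring)
    have hint2 : IntervalIntegrable (fun s => αb s * E s) volume t₀ T :=
      (hαb.mul hE).intervalIntegrable t₀ T
    have h := intervalIntegral.integral_eq_sub_of_hasDerivAt hder hint2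
    linarith [h]
  have hθsplit : θb t₀ - θb T = ∫ s in t₀..T, αb s := by
    have h := intervalIntegral.integral_add_adjacent_intervals
      (hIab αb hαb 0 t₀) (hIab αb hαb t₀ T)
    simp only [hθbdef]
    linarith
  have hintα : (∫ s in t₀..T, α s) = θb t₀ - θb T := by
    rw [hθsplit]
    exact integral_congr_Ici ht₀ ht₀T (fun s hs => (hαeq s hs).symm)
  -- rho
  have hρeq : ∀ X, 0 ≤ X → rhoL α σ X = ∫ s in (0:ℝ)..X, (σb s * E s) ^ 2 := by
    intro X hX
    apply integral_congr_Ici le_rfl hX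
    intro s hs
    rw [hθeq s hs, ← hσeq s hs, mul_pow, two_mul, Real.exp_add]
    simp only [hEdef]
    ring
  have hGint : ∀ a b : ℝ, IntervalIntegrable (fun s => (σb s * E s) ^ 2) volume a b :=
    fun a b => ((hσb.mul hE).pow 2).intervalIntegrable a b
  have hu_eq : rhoL α σ T - rhoL α σ t₀ = ∫ s in t₀..T, (σb s * E s) ^ 2 := by
    rw [hρeq T hT0, hρeq t₀ ht₀]
    have h := intervalIntegral.integral_add_adjacent_intervals (hGint 0 t₀) (hGint t₀ T)
    linarith
  have hu0 : 0 ≤ rhoL α σ T - rhoL α σ t₀ := by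
    rw [hu_eq]
    exact intervalIntegral.integral_nonneg ht₀T (fun s _ => sq_nonneg _)
  -- c
  have hc : ∀ X, 0 ≤ X → cL α β X = Real.exp (-(θb X)) * ∫ s in (0:ℝ)..X, βb s * E s := by
    intro X hX
    rw [cL, hθeq X hX]
    congr 1
    exact integral_congr_Ici le_rfl hX (fun s hs => by rw [hβeq s hs, hθeq s hs])
  have hβEint : ∀ a b : ℝ, IntervalIntegrable (fun s => βb s * E s) volume a b :=
    fun a b => (hβb.mul hE).intervalIntegrable a b
  have hsplitβ : (∫ s in (0:ℝ)..T, βb s * E s)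
      = (∫ s in (0:ℝ)..t₀, βb s * E s) + ∫ s in t₀..T, βb s * E s :=
    (intervalIntegral.integral_add_adjacent_intervals (hβEint 0 t₀) (hβEint t₀ T)).symm
  set Cval := ∫ s in t₀..T, (βb s + x₀ * αb s) * E s with hCvaldef
  have hCval : Cval = (∫ s in t₀..T, βb s * E s) + x₀ * ∫ s in t₀..T, αb s * E s := by
    rw [hCvaldef, ← intervalIntegral.integral_const_mul,
      ← intervalIntegral.integral_add (hβEint t₀ T)
        (hIab (fun s => x₀ * (αb s * E s)) (continuous_const.mul (hαb.mul hE)) t₀ T)]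
    exact intervalIntegral.integral_congr (fun s _ => by ring)
  -- key identity
  have hKey : cL α β T + (x₀ - cL α β t₀) * Real.exp (∫ s in t₀..T, α s) - x₀
      = Real.exp (-(θb T)) * Cval := by
    rw [hc T hT0, hc t₀ ht₀, hintα, hCval, hEsub, hsplitβ]
    have h1 : E t₀ = Real.exp (θb t₀) := rfl
    have h2 : E T = Real.exp (θb T) := rfl
    have E1 : Real.exp (-(θb t₀)) = (Real.exp (θb t₀))⁻¹ := Real.exp_neg _
    have E2 : Real.exp (-(θb T)) = (Real.exp (θb T))⁻¹ := Real.exp_neg _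
    have E3 : Real.exp (θb t₀ - θb T) = Real.exp (θb t₀) * (Real.exp (θb T))⁻¹ := by
      rw [Real.exp_sub, div_eq_mul_inv]
    rw [h1, h2, E1, E2, E3]
    have e1 : Real.exp (θb t₀) ≠ 0 := (Real.exp_pos _).ne'
    have e2 : Real.exp (θb T) ≠ 0 := (Real.exp_pos _).ne'
    field_simp
    ring
  -- Cauchy-Schwarz
  set fq : ℝ → ℝ := (fun s => (βb s + x₀ * αb s) / σb s) with hfqdef
  have hfq : Continuous fq :=
    (hβb.add (continuous_const.mul hαb)).div hσb (fun s => (hσbpos s).ne')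
  set G : ℝ → ℝ := (fun s => σb s * E s) with hGdef
  have hG : Continuous G := hσb.mul hE
  have hGpos : ∀ s, 0 < G s := fun s => mul_pos (hσbpos s) (hEpos s)
  have hfg : ∀ s, fq s * G s = (βb s + x₀ * αb s) * E s := by
    intro s
    simp only [hfqdef, hGdef]
    rw [div_mul_eq_mul_div, div_eq_iff (hσbpos s).ne']
    ring
  have hCS : |Cval| ≤ Real.sqrt (∫ s in t₀..T, fq s ^ 2)
      * Real.sqrt (∫ s in t₀..T, G s ^ 2) := by
    have h := cs_aux fq G hfq hG hGpos t₀ T ht₀T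
    rwa [intervalIntegral.integral_congr (fun s _ => hfg s), ← hCvaldef] at h
  have hsqG : Real.sqrt (∫ s in t₀..T, G s ^ 2) ≤ d := by
    have h : (∫ s in t₀..T, G s ^ 2) = rhoL α σ T - rhoL α σ t₀ := hu_eq.symm
    rw [h]
    calc Real.sqrt (rhoL α σ T - rhoL α σ t₀) ≤ Real.sqrt (d ^ 2) := Real.sqrt_le_sqrt hud
      _ = d := Real.sqrt_sq hd.le
  set A' := ∫ s in t₀..(t₀ + m), |β s + x₀ * α s| ^ 2 / (σ s) ^ 2 with hA'def
  have hfqint : ∀ a b : ℝ, IntervalIntegrable (fun s => fq s ^ 2) volume a b :=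
    fun a b => (hfq.pow 2).intervalIntegrable a b
  have hsqf : Real.sqrt (∫ s in t₀..T, fq s ^ 2) ≤ Real.sqrt A' := by
    apply Real.sqrt_le_sqrt
    have hmono : (∫ s in t₀..T, fq s ^ 2) ≤ ∫ s in t₀..(t₀ + m), fq s ^ 2 := by
      have h := intervalIntegral.integral_add_adjacent_intervals (hfqint t₀ T) (hfqint T (t₀ + m))
      have h2 : (0:ℝ) ≤ ∫ s in T..(t₀ + m), fq s ^ 2 :=
        intervalIntegral.integral_nonneg hTm (fun s _ => sq_nonneg _)
      linarith
    have hcongr : (∫ s in t₀..(t₀ + m), fq s ^ 2) = A' := by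
      rw [hA'def]
      apply integral_congr_Ici ht₀ (by linarith)
      intro s hs
      rw [hfqdef]
      simp only
      rw [hαeq s hs, hβeq s hs, hσeq s hs, div_pow, sq_abs]
    linarith
  have hA'0 : 0 ≤ Real.sqrt A' := Real.sqrt_nonneg _
  have hCbound : -(Real.sqrt A' * d) ≤ Cval := by
    have h1 : |Cval| ≤ Real.sqrt A' * d := by
      calc |Cval| ≤ Real.sqrt (∫ s in t₀..T, fq s ^ 2)
          * Real.sqrt (∫ s in t₀..T, G s ^ 2) := hCS
        _ ≤ Real.sqrt A' * d :=
          mul_le_mul hsqf hsqG (Real.sqrt_nonneg _) hA'0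
    linarith [neg_abs_le Cval]
  -- psi bound
  have hψ : -(d / Real.sqrt (Real.exp 1)) ≤ psiMinus d (rhoL α σ T - rhoL α σ t₀) :=
    psiMinus_ge d _ hd hu0 hud
  -- exp bound
  have hαabsint : ∀ a b : ℝ, IntervalIntegrable (fun s => |αb s|) volume a b :=
    fun a b => hαb.abs.intervalIntegrable a b
  have hP : Real.exp (-(θb T))
      ≤ Real.exp (-(thetaL α t₀)) * Real.exp (∫ s in t₀..(t₀ + m), |α s|) := by
    rw [hθeq t₀ ht₀, ← Real.exp_add]
    apply Real.exp_le_exp.mpr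
    have h2 : (∫ s in t₀..T, αb s) ≤ ∫ s in t₀..T, |αb s| :=
      intervalIntegral.integral_mono_on ht₀T (hαb.intervalIntegrable t₀ T) (hαabsint t₀ T)
        (fun s _ => le_abs_self _)
    have h3 : (∫ s in t₀..T, |αb s|) ≤ ∫ s in t₀..(t₀ + m), |αb s| := by
      have h := intervalIntegral.integral_add_adjacent_intervals (hαabsint t₀ T)
        (hαabsint T (t₀ + m))
      have h4 : (0:ℝ) ≤ ∫ s in T..(t₀ + m), |αb s| :=
        intervalIntegral.integral_nonneg hTm (fun s _ => abs_nonneg _)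
      linarith
    have h5 : (∫ s in t₀..(t₀ + m), |αb s|) = ∫ s in t₀..(t₀ + m), |α s| :=
      integral_congr_Ici ht₀ (by linarith) (fun s hs => by rw [hαeq s hs])
    linarith [hθsplit]
  -- assemble
  have hRHS : psiMinusL α β σ d t₀ x₀ t
      = x₀ + Real.exp (-(θb T)) * (psiMinus d (rhoL α σ T - rhoL α σ t₀) + Cval) := by
    rw [psiMinusL, ← hTdef, hθeq T hT0]
    linear_combination hKey
  rw [hRHS]
  set P := Real.exp (-(θb T)) with hPdef
  have hPpos : 0 < P := Real.exp_pos _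
  set K := d / Real.sqrt (Real.exp 1) + Real.sqrt A' * d with hKdef
  have hK0 : 0 ≤ K := by
    apply add_nonneg
    · exact div_nonneg hd.le (Real.sqrt_nonneg _)
    · exact mul_nonneg hA'0 hd.le
  have hS : -K ≤ psiMinus d (rhoL α σ T - rhoL α σ t₀) + Cval := by
    rw [hKdef]
    have := hψ
    have := hCbound
    linarith
  have hΔ : d * deltaM α β σ t₀ x₀ m
      = (Real.exp (-(thetaL α t₀)) * Real.exp (∫ s in t₀..(t₀ + m), |α s|)) * K := by
    rw [deltaM, hKdef, ← hA'def]
    ring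
  have e1 : P * (-K) ≤ P * (psiMinus d (rhoL α σ T - rhoL α σ t₀) + Cval) :=
    mul_le_mul_of_nonneg_left hS hPpos.le
  have e2 : P * K ≤ (Real.exp (-(thetaL α t₀)) * Real.exp (∫ s in t₀..(t₀ + m), |α s|)) * K :=
    mul_le_mul_of_nonneg_right hP hK0
  have e3 : P * (-K) = -(P * K) := by ring
  linarith [e1, e2]
end

section
/- Let a < x₀ < b, γ ∈ (0,1), t₀ ≥ 0 and m > 0, and let d > 0 satisfy the three conditions d ≤ (b_{γ,x₀} − x₀)/Δ_m, d ≤ (x₀ − a_{γ,x₀})/Δ_m and d² ≤ ρ(t₀+m) − ρ(t₀). Then the spheroid associated to the L-class diffusion started at (t₀, x₀) is totally included in [a_{γ,x₀}, b_{γ,x₀}]: for every t ∈ [0, m] with ρ(t+t₀) − ρ(t₀) ≤ d², one has a_{γ,x₀} ≤ ψ₋^L(t; t₀, x₀) and ψ₊^L(t; t₀, x₀) ≤ b_{γ,x₀}. In particular this holds for the choice d = min(1, κ₊)·(b_{γ,x₀} − x₀)/Δ_m when b − x₀ ≤ x₀ − a, and d = min(1, κ₋)·(x₀ − a_{γ,x₀})/Δ_m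 when x₀ − a ≤ b − x₀, where κ₊·(b_{γ,x₀} − x₀) = Δ_m·√(ρ(t₀+m) − ρ(t₀)) and κ₋·(x₀ − a_{γ,x₀}) = Δ_m·√(ρ(t₀+m) − ρ(t₀)). -/
open MeasureTheory intervalIntegral

/-- `a_{γ,x} = a + γ(x − a)`. -/
def aGamma (a γ x : ℝ) : ℝ := a + γ * (x - a)

/-- `b_{γ,x} = b − γ(b − x)`. -/
def bGamma (b γ x : ℝ) : ℝ := b - γ * (b - x)

section Aux

variable {A B S : ℝ → ℝ}

lemma psi_bound {u d : ℝ} (hu : 0 ≤ u) (hd : 0 < d) :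
    Real.sqrt (u * Real.log (d ^ 2 / u)) ≤ d * (1 / Real.sqrt (Real.exp 1)) := by
  have he : (0:ℝ) < Real.exp 1 := Real.exp_pos 1
  have key : u * Real.log (d ^ 2 / u) ≤ d ^ 2 / Real.exp 1 := by
    rcases eq_or_lt_of_le hu with h | h
    · rw [← h]; simp; positivity
    · have hx : (0:ℝ) < d ^ 2 / (Real.exp 1 * u) := by positivity
      have hlog := Real.log_le_sub_one_of_pos hx
      have hre : Real.log (d ^ 2 / u) = Real.log (d ^ 2 / (Real.exp 1 * u)) + 1 := by
        rw [Real.log_div (by positivity) (by positivity),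
          Real.log_div (by positivity) (by positivity),
          Real.log_mul (by positivity) (ne_of_gt h), Real.log_exp]; ring
      rw [hre]
      have h2 : u * (Real.log (d ^ 2 / (Real.exp 1 * u)) + 1) ≤ u * (d ^ 2 / (Real.exp 1 * u)) := by
        apply mul_le_mul_of_nonneg_left _ hu; linarith
      calc u * (Real.log (d ^ 2 / (Real.exp 1 * u)) + 1) ≤ u * (d ^ 2 / (Real.exp 1 * u)) := h2
        _ = d ^ 2 / Real.exp 1 := by field_simp
  calc Real.sqrt (u * Real.log (d ^ 2 / u)) ≤ Real.sqrt (d ^ 2 / Real.exp 1) :=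
        Real.sqrt_le_sqrt key
    _ = d * (1 / Real.sqrt (Real.exp 1)) := by
        rw [Real.sqrt_div (by positivity), Real.sqrt_sq hd.le]; ring

lemma cauchy_schwarz_interval {f g : ℝ → ℝ} (hf : Continuous f) (hg : Continuous g)
    (hf0 : ∀ x, 0 ≤ f x) (hg0 : ∀ x, 0 ≤ g x) {a b : ℝ} (hab : a ≤ b) :
    ∫ s in a..b, f s * g s ≤
      Real.sqrt (∫ s in a..b, (f s) ^ 2) * Real.sqrt (∫ s in a..b, (g s) ^ 2) := by
  set P := ∫ s in a..b, (f s) ^ 2 with hP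
  set Q := ∫ s in a..b, (g s) ^ 2 with hQ
  set I := ∫ s in a..b, f s * g s with hI
  have hPnn : 0 ≤ P := intervalIntegral.integral_nonneg hab (fun x _ => by positivity)
  have hQnn : 0 ≤ Q := intervalIntegral.integral_nonneg hab (fun x _ => by positivity)
  have hInn : 0 ≤ I := intervalIntegral.integral_nonneg hab
    (fun x _ => mul_nonneg (hf0 x) (hg0 x))
  have hquad : ∀ t : ℝ, 0 ≤ P * (t * t) + (-2 * I) * t + Q := by
    intro t
    have hexp : ∀ s, (t * f s - g s) ^ 2
        = t ^ 2 * (f s) ^ 2 + (-2 * t) * (f s * g s) + (g s) ^ 2 := by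
      intro s; ring
    have h0 : 0 ≤ ∫ s in a..b, (t * f s - g s) ^ 2 :=
      intervalIntegral.integral_nonneg hab (fun x _ => by positivity)
    have hint : (∫ s in a..b, (t * f s - g s) ^ 2)
        = t ^ 2 * P + (-2 * t) * I + Q := by
      simp_rw [hexp]
      rw [intervalIntegral.integral_add (Continuous.intervalIntegrable (by fun_prop) a b)
        (Continuous.intervalIntegrable (by fun_prop) a b),
        intervalIntegral.integral_add (Continuous.intervalIntegrable (by fun_prop) a b)
          (Continuous.intervalIntegrable (by fun_prop) a b),
        intervalIntegral.integral_const_mul, intervalIntegral.integral_const_mul]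
    nlinarith [hint ▸ h0]
  have hdisc := discrim_le_zero hquad
  rw [discrim] at hdisc
  have hIQ : I ^ 2 ≤ P * Q := by nlinarith
  calc I = Real.sqrt (I ^ 2) := by rw [Real.sqrt_sq hInn]
    _ ≤ Real.sqrt (P * Q) := Real.sqrt_le_sqrt hIQ
    _ = Real.sqrt P * Real.sqrt Q := Real.sqrt_mul hPnn _

lemma theta_hasDerivAt (hA : Continuous A) (t : ℝ) : HasDerivAt (thetaL A) (-(A t)) t := by
  have := (intervalIntegral.integral_hasDerivAt_right (hA.intervalIntegrable 0 t)
    (hA.stronglyMeasurableAtFilter _ _) hA.continuousAt)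
  exact this.neg

lemma theta_continuous (hA : Continuous A) : Continuous (thetaL A) := by
  apply continuous_iff_continuousAt.2
  exact fun t => (theta_hasDerivAt hA t).continuousAt

lemma exp_theta_integral (hA : Continuous A) (a b : ℝ) :
    ∫ s in a..b, A s * Real.exp (thetaL A s) =
      Real.exp (thetaL A a) - Real.exp (thetaL A b) := by
  have hderiv : ∀ x ∈ Set.uIcc a b,
      HasDerivAt (fun s => -Real.exp (thetaL A s)) (A x * Real.exp (thetaL A x)) x := by
    intro x _
    have this : HasDerivAt (fun s => -Real.exp (thetaL A s)) (-(Real.exp (thetaL A x) * -A x)) x :=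
      ((theta_hasDerivAt hA x).exp).neg
    convert this using 1; ring
  have hint : IntervalIntegrable (fun s => A s * Real.exp (thetaL A s)) volume a b :=
    (hA.mul ((theta_continuous hA).rexp)).intervalIntegrable a b
  have := intervalIntegral.integral_eq_sub_of_hasDerivAt hderiv hint
  rw [this]; ring

lemma interval_sub (hA : Continuous A) (a b : ℝ) :
    ∫ s in a..b, A s = thetaL A a - thetaL A b := by
  have h := intervalIntegral.integral_add_adjacent_intervals
    (hA.intervalIntegrable (μ := volume) 0 a) (hA.intervalIntegrable (μ := volume) a b)
  simp only [thetaL]; linarith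

lemma rho_sub (hA : Continuous A) (hS : Continuous S) (a b : ℝ) :
    rhoL A S b - rhoL A S a = ∫ s in a..b, (S s) ^ 2 * Real.exp (2 * thetaL A s) := by
  have hcont : Continuous fun s : ℝ => (S s) ^ 2 * Real.exp (2 * thetaL A s) :=
    (hS.pow 2).mul ((continuous_const.mul (theta_continuous hA)).rexp :
      Continuous fun s : ℝ => Real.exp (2 * thetaL A s))
  have h := intervalIntegral.integral_add_adjacent_intervals
    (hcont.intervalIntegrable (μ := volume) 0 a)
    (hcont.intervalIntegrable (μ := volume) a b)
  simp only [rhoL]; linarith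

lemma drift_eq (hA : Continuous A) (hB : Continuous B) (x₀ t₀ T : ℝ) :
    cL A B T + (x₀ - cL A B t₀) * Real.exp (∫ s in t₀..T, A s) - x₀ =
      Real.exp (-(thetaL A T)) * ∫ s in t₀..T, (B s + x₀ * A s) * Real.exp (thetaL A s) := by
  have hBe : Continuous fun s => B s * Real.exp (thetaL A s) :=
    hB.mul ((theta_continuous hA).rexp)
  have hAe : Continuous fun s => A s * Real.exp (thetaL A s) :=
    hA.mul ((theta_continuous hA).rexp)
  have hsplit : (∫ s in t₀..T, (B s + x₀ * A s) * Real.exp (thetaL A s)) =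
      (∫ s in t₀..T, B s * Real.exp (thetaL A s)) +
        x₀ * ∫ s in t₀..T, A s * Real.exp (thetaL A s) := by
    rw [← intervalIntegral.integral_const_mul, ← intervalIntegral.integral_add
      (hBe.intervalIntegrable _ _) (by
        have hc : Continuous fun s => x₀ * (A s * Real.exp (thetaL A s)) := continuous_const.mul hAe
        exact hc.intervalIntegrable _ _)]
    congr 1; ext s; ring
  have hBadd := intervalIntegral.integral_add_adjacent_intervals
    (hBe.intervalIntegrable (μ := volume) 0 t₀) (hBe.intervalIntegrable (μ := volume) t₀ T)
  have hexpA := exp_theta_integral hA t₀ T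
  rw [hsplit, interval_sub hA t₀ T]
  simp only [cL]
  rw [Real.exp_sub, hexpA]
  have e1 : Real.exp (thetaL A t₀) ≠ 0 := Real.exp_ne_zero _
  have e2 : Real.exp (thetaL A T) ≠ 0 := Real.exp_ne_zero _
  rw [Real.exp_neg, Real.exp_neg]
  field_simp
  nlinarith [hBadd, Real.exp_pos (thetaL A T), Real.exp_pos (thetaL A t₀)]

lemma key_bound (hA : Continuous A) (hB : Continuous B) (hS : Continuous S)
    (hSpos : ∀ t, 0 < S t) (x₀ t₀ m d t : ℝ)
    (hd : 0 < d) (ht0 : 0 ≤ t) (htm : t ≤ m)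
    (hu : rhoL A S (t + t₀) - rhoL A S t₀ ≤ d ^ 2) :
    Real.exp (-(thetaL A (t + t₀))) *
        Real.sqrt ((rhoL A S (t + t₀) - rhoL A S t₀) *
          Real.log (d ^ 2 / (rhoL A S (t + t₀) - rhoL A S t₀)))
      + |cL A B (t + t₀) + (x₀ - cL A B t₀) * Real.exp (∫ s in t₀..(t + t₀), A s) - x₀|
      ≤ d * deltaM A B S t₀ x₀ m := by
  set T := t + t₀ with hT
  have htt : t₀ ≤ T := by simp [hT]; linarith
  have htm' : T ≤ t₀ + m := by simp [hT]; linarith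
  set u := rhoL A S T - rhoL A S t₀ with hu'
  have hθc : Continuous (thetaL A) := theta_continuous hA
  have hrho := rho_sub hA hS t₀ T
  have hu0 : 0 ≤ u := by
    rw [hu', hrho]
    exact intervalIntegral.integral_nonneg htt (fun x _ => by positivity)
  set E := Real.exp (-(thetaL A T)) with hE
  have hEpos : 0 < E := Real.exp_pos _
  have hintA : ∫ s in t₀..T, A s = thetaL A t₀ - thetaL A T := interval_sub hA t₀ T
  have habs1 : (∫ s in t₀..T, A s) ≤ ∫ s in t₀..T, |A s| :=
    intervalIntegral.integral_mono_on htt (hA.intervalIntegrable (μ := volume) t₀ T)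
      (hA.abs.intervalIntegrable (μ := volume) t₀ T) (fun x _ => le_abs_self _)
  have habs2 : (∫ s in t₀..T, |A s|) ≤ ∫ s in t₀..(t₀ + m), |A s| := by
    have h := intervalIntegral.integral_add_adjacent_intervals
      (hA.abs.intervalIntegrable (μ := volume) t₀ T)
      (hA.abs.intervalIntegrable (μ := volume) T (t₀ + m))
    have h2 : 0 ≤ ∫ s in T..(t₀ + m), |A s| :=
      intervalIntegral.integral_nonneg htm' (fun x _ => abs_nonneg _)
    linarith
  have hEF : E ≤ Real.exp (-(thetaL A t₀)) * Real.exp (∫ s in t₀..(t₀ + m), |A s|) := by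
    rw [hE, ← Real.exp_add]
    apply Real.exp_le_exp.2
    linarith [hintA]
  have hpsi : Real.sqrt (u * Real.log (d ^ 2 / u)) ≤ d * (1 / Real.sqrt (Real.exp 1)) :=
    psi_bound hu0 hd
  set h := fun s => B s + x₀ * A s with hh
  have hhc : Continuous h := hB.add (continuous_const.mul hA)
  set f := fun s => |h s| / S s with hf
  set g := fun s => S s * Real.exp (thetaL A s) with hg
  have hfc : Continuous f := hhc.abs.div hS (fun x => (hSpos x).ne')
  have hgc : Continuous g := hS.mul hθc.rexp
  have hf0 : ∀ x, 0 ≤ f x := fun x => div_nonneg (abs_nonneg _) (hSpos x).le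
  have hg0 : ∀ x, 0 ≤ g x := fun x => mul_nonneg (hSpos x).le (Real.exp_pos _).le
  have hdrift := drift_eq hA hB x₀ t₀ T
  have step1 : |∫ s in t₀..T, h s * Real.exp (thetaL A s)| ≤ ∫ s in t₀..T, f s * g s := by
    have := intervalIntegral.abs_integral_le_integral_abs
      (f := fun s => h s * Real.exp (thetaL A s)) (μ := volume) htt
    have heq : ∀ s, |h s * Real.exp (thetaL A s)| = f s * g s := by
      intro s
      rw [abs_mul, abs_of_pos (Real.exp_pos _), hf, hg]
      field_simp [(hSpos s).ne']
    calc |∫ s in t₀..T, h s * Real.exp (thetaL A s)|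
        ≤ ∫ s in t₀..T, |h s * Real.exp (thetaL A s)| := this
      _ = ∫ s in t₀..T, f s * g s := by simp_rw [heq]
  have step2 := cauchy_schwarz_interval hfc hgc hf0 hg0 htt
  have hg2 : (∫ s in t₀..T, (g s) ^ 2) = u := by
    rw [hu', hrho]
    congr 1; ext s
    rw [hg]
    rw [mul_pow, sq (Real.exp _), ← Real.exp_add]
    ring_nf
  have hsqg : Real.sqrt (∫ s in t₀..T, (g s) ^ 2) ≤ d := by
    rw [hg2]
    calc Real.sqrt u ≤ Real.sqrt (d ^ 2) := Real.sqrt_le_sqrt hu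
      _ = d := Real.sqrt_sq hd.le
  have hf2mono : (∫ s in t₀..T, (f s) ^ 2) ≤ ∫ s in t₀..(t₀ + m), (f s) ^ 2 := by
    have h := intervalIntegral.integral_add_adjacent_intervals
      ((hfc.pow 2).intervalIntegrable (μ := volume) t₀ T)
      ((hfc.pow 2).intervalIntegrable (μ := volume) T (t₀ + m))
    have h2 : 0 ≤ ∫ s in T..(t₀ + m), (f s) ^ 2 :=
      intervalIntegral.integral_nonneg htm' (fun x _ => by positivity)
    simp only [Pi.pow_apply] at h
    linarith
  have hfI : (∫ s in t₀..(t₀ + m), (f s) ^ 2)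
      = ∫ s in t₀..(t₀ + m), |h s| ^ 2 / (S s) ^ 2 := by
    congr 1; ext s; rw [hf]; rw [div_pow]
  have hdriftbound : |cL A B T + (x₀ - cL A B t₀) * Real.exp (∫ s in t₀..T, A s) - x₀|
      ≤ E * (d * Real.sqrt (∫ s in t₀..(t₀ + m), |h s| ^ 2 / (S s) ^ 2)) := by
    rw [hdrift, abs_mul, abs_of_pos hEpos]
    apply mul_le_mul_of_nonneg_left _ hEpos.le
    calc |∫ s in t₀..T, h s * Real.exp (thetaL A s)| ≤ ∫ s in t₀..T, f s * g s := step1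
      _ ≤ Real.sqrt (∫ s in t₀..T, (f s) ^ 2) * Real.sqrt (∫ s in t₀..T, (g s) ^ 2) := step2
      _ ≤ Real.sqrt (∫ s in t₀..(t₀ + m), |h s| ^ 2 / (S s) ^ 2) * d := by
          apply mul_le_mul _ hsqg (Real.sqrt_nonneg _) (Real.sqrt_nonneg _)
          rw [← hfI]
          exact Real.sqrt_le_sqrt hf2mono
      _ = d * Real.sqrt (∫ s in t₀..(t₀ + m), |h s| ^ 2 / (S s) ^ 2) := mul_comm _ _
  have hsum : E * Real.sqrt (u * Real.log (d ^ 2 / u))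
      + |cL A B T + (x₀ - cL A B t₀) * Real.exp (∫ s in t₀..T, A s) - x₀|
      ≤ E * (d * (1 / Real.sqrt (Real.exp 1)))
        + E * (d * Real.sqrt (∫ s in t₀..(t₀ + m), |h s| ^ 2 / (S s) ^ 2)) := by
    gcongr
  rw [deltaM]
  have hsq0 : 0 ≤ Real.sqrt (∫ s in t₀..(t₀ + m), |h s| ^ 2 / (S s) ^ 2) := Real.sqrt_nonneg _
  have hse : 0 < 1 / Real.sqrt (Real.exp 1) := by positivity
  have hfinal : E * (d * (1 / Real.sqrt (Real.exp 1)))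
      + E * (d * Real.sqrt (∫ s in t₀..(t₀ + m), |h s| ^ 2 / (S s) ^ 2))
      ≤ d * (Real.exp (-(thetaL A t₀)) * Real.exp (∫ s in t₀..(t₀ + m), |A s|) *
        (1 / Real.sqrt (Real.exp 1)
          + Real.sqrt (∫ s in t₀..(t₀ + m), |B s + x₀ * A s| ^ 2 / (S s) ^ 2))) := by
    have hrw : E * (d * (1 / Real.sqrt (Real.exp 1)))
        + E * (d * Real.sqrt (∫ s in t₀..(t₀ + m), |h s| ^ 2 / (S s) ^ 2))
        = d * (E * (1 / Real.sqrt (Real.exp 1)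
          + Real.sqrt (∫ s in t₀..(t₀ + m), |h s| ^ 2 / (S s) ^ 2))) := by ring
    rw [hrw, hh]
    apply mul_le_mul_of_nonneg_left _ hd.le
    apply mul_le_mul_of_nonneg_right hEF (by positivity)
  linarith

end Aux

section Congruence

lemma ext_continuous {α : ℝ → ℝ} (hα : ContinuousOn α (Set.Ici 0)) :
    Continuous fun s => α (max s 0) :=
  hα.comp_continuous (continuous_id.max continuous_const)
    fun x => Set.mem_Ici.2 (le_max_right x 0)

lemma interval_integral_congr_nonneg {F G : ℝ → ℝ} {a b : ℝ} (ha : 0 ≤ a) (hb : 0 ≤ b)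
    (h : ∀ s, 0 ≤ s → F s = G s) : ∫ s in a..b, F s = ∫ s in a..b, G s := by
  apply intervalIntegral.integral_congr
  intro s hs
  exact h s (le_trans (le_min ha hb) hs.1)

lemma theta_congr (α : ℝ → ℝ) {t : ℝ} (ht : 0 ≤ t) :
    thetaL α t = thetaL (fun s => α (max s 0)) t := by
  unfold thetaL; congr 1
  exact interval_integral_congr_nonneg le_rfl ht fun s hs => by simp [max_eq_left hs]

lemma cL_congr (α β : ℝ → ℝ) {t : ℝ} (ht : 0 ≤ t) :
    cL α β t = cL (fun s => α (max s 0)) (fun s => β (max s 0)) t := by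
  unfold cL
  rw [← theta_congr α ht]
  congr 1
  exact interval_integral_congr_nonneg le_rfl ht fun s hs => by
    simp [max_eq_left hs, ← theta_congr α hs]

lemma rhoL_congr (α σ : ℝ → ℝ) {t : ℝ} (ht : 0 ≤ t) :
    rhoL α σ t = rhoL (fun s => α (max s 0)) (fun s => σ (max s 0)) t := by
  unfold rhoL
  exact interval_integral_congr_nonneg le_rfl ht fun s hs => by
    simp [max_eq_left hs, ← theta_congr α hs]

lemma deltaM_congr (α β σ : ℝ → ℝ) {t₀ m : ℝ} (ht₀ : 0 ≤ t₀) (hm : 0 ≤ m) (x₀ : ℝ) :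
    deltaM α β σ t₀ x₀ m =
      deltaM (fun s => α (max s 0)) (fun s => β (max s 0)) (fun s => σ (max s 0)) t₀ x₀ m := by
  unfold deltaM
  rw [← theta_congr α ht₀,
    interval_integral_congr_nonneg ht₀ (by linarith) (fun s hs => by simp [max_eq_left hs]
      : ∀ s, 0 ≤ s → |α s| = |α (max s 0)|),
    interval_integral_congr_nonneg ht₀ (by linarith) (fun s hs => by simp [max_eq_left hs]
      : ∀ s, 0 ≤ s → |β s + x₀ * α s| ^ 2 / (σ s) ^ 2
          = |β (max s 0) + x₀ * α (max s 0)| ^ 2 / (σ (max s 0)) ^ 2)]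

lemma intA_congr (α : ℝ → ℝ) {a b : ℝ} (ha : 0 ≤ a) (hb : 0 ≤ b) :
    ∫ s in a..b, α s = ∫ s in a..b, α (max s 0) :=
  interval_integral_congr_nonneg ha hb fun s hs => by simp [max_eq_left hs]

end Congruence


set_option maxHeartbeats 1000000 in
/-- If `d` satisfies the three size conditions, the spheroid associated to the L-class
diffusion started at `(t₀, x₀)` is totally included in `[a_{γ,x₀}, b_{γ,x₀}]`; in particular
this holds for the scale parameter `d` defined in the paper via `κ₊` and `κ₋`. -/
theorem spheroid_size_determination (α β σ : ℝ → ℝ)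
    (hα : ContinuousOn α (Set.Ici 0)) (hβ : ContinuousOn β (Set.Ici 0))
    (hσ : ContinuousOn σ (Set.Ici 0)) (hσpos : ∀ t ∈ Set.Ici (0 : ℝ), 0 < σ t)
    (a b x₀ γ t₀ m : ℝ) (hax : a < x₀) (hxb : x₀ < b) (hγ : γ ∈ Set.Ioo (0 : ℝ) 1)
    (ht₀ : 0 ≤ t₀) (hm : 0 < m) :
    (∀ d : ℝ, 0 < d →
      d ≤ (bGamma b γ x₀ - x₀) / deltaM α β σ t₀ x₀ m →
      d ≤ (x₀ - aGamma a γ x₀) / deltaM α β σ t₀ x₀ m →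
      d ^ 2 ≤ rhoL α σ (t₀ + m) - rhoL α σ t₀ →
      ∀ t ∈ Set.Icc (0 : ℝ) m, rhoL α σ (t + t₀) - rhoL α σ t₀ ≤ d ^ 2 →
        aGamma a γ x₀ ≤ psiMinusL α β σ d t₀ x₀ t ∧
        psiPlusL α β σ d t₀ x₀ t ≤ bGamma b γ x₀) ∧
    (∀ κp : ℝ,
      κp * (bGamma b γ x₀ - x₀) =
        deltaM α β σ t₀ x₀ m * Real.sqrt (rhoL α σ (t₀ + m) - rhoL α σ t₀) →
      b - x₀ ≤ x₀ - a →
      ∀ t ∈ Set.Icc (0 : ℝ) m,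
        rhoL α σ (t + t₀) - rhoL α σ t₀ ≤
          (min 1 κp * (bGamma b γ x₀ - x₀) / deltaM α β σ t₀ x₀ m) ^ 2 →
        aGamma a γ x₀ ≤
          psiMinusL α β σ (min 1 κp * (bGamma b γ x₀ - x₀) / deltaM α β σ t₀ x₀ m) t₀ x₀ t ∧
        psiPlusL α β σ (min 1 κp * (bGamma b γ x₀ - x₀) / deltaM α β σ t₀ x₀ m) t₀ x₀ t ≤
          bGamma b γ x₀) ∧
    (∀ κm : ℝ,
      κm * (x₀ - aGamma a γ x₀) =
        deltaM α β σ t₀ x₀ m * Real.sqrt (rhoL α σ (t₀ + m) - rhoL α σ t₀) →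
      x₀ - a ≤ b - x₀ →
      ∀ t ∈ Set.Icc (0 : ℝ) m,
        rhoL α σ (t + t₀) - rhoL α σ t₀ ≤
          (min 1 κm * (x₀ - aGamma a γ x₀) / deltaM α β σ t₀ x₀ m) ^ 2 →
        aGamma a γ x₀ ≤
          psiMinusL α β σ (min 1 κm * (x₀ - aGamma a γ x₀) / deltaM α β σ t₀ x₀ m) t₀ x₀ t ∧
        psiPlusL α β σ (min 1 κm * (x₀ - aGamma a γ x₀) / deltaM α β σ t₀ x₀ m) t₀ x₀ t ≤
          bGamma b γ x₀) := by
  have hA : Continuous fun s => α (max s 0) := ext_continuous hα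
  have hB : Continuous fun s => β (max s 0) := ext_continuous hβ
  have hS : Continuous fun s => σ (max s 0) := ext_continuous hσ
  have hSpos' : ∀ s : ℝ, 0 < σ (max s 0) := fun s => hσpos _ (Set.mem_Ici.2 (le_max_right s 0))
  have hΔeq := deltaM_congr α β σ ht₀ hm.le x₀
  have hΔpos : 0 < deltaM α β σ t₀ x₀ m := by
    rw [deltaM]
    have h1 : 0 < Real.sqrt (Real.exp 1) := Real.sqrt_pos.2 (Real.exp_pos 1)
    have h2 : 0 ≤ Real.sqrt (∫ s in t₀..(t₀ + m), |β s + x₀ * α s| ^ 2 / (σ s) ^ 2) :=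
      Real.sqrt_nonneg _
    positivity
  have hbγ : 0 < bGamma b γ x₀ - x₀ := by
    simp only [bGamma]; nlinarith [hγ.2]
  have haγ : 0 < x₀ - aGamma a γ x₀ := by
    simp only [aGamma]; nlinarith [hγ.2]
  have main : ∀ d : ℝ, 0 < d →
      d ≤ (bGamma b γ x₀ - x₀) / deltaM α β σ t₀ x₀ m →
      d ≤ (x₀ - aGamma a γ x₀) / deltaM α β σ t₀ x₀ m →
      d ^ 2 ≤ rhoL α σ (t₀ + m) - rhoL α σ t₀ →
      ∀ t ∈ Set.Icc (0 : ℝ) m, rhoL α σ (t + t₀) - rhoL α σ t₀ ≤ d ^ 2 →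
        aGamma a γ x₀ ≤ psiMinusL α β σ d t₀ x₀ t ∧
        psiPlusL α β σ d t₀ x₀ t ≤ bGamma b γ x₀ := by
    intro d hd hd1 hd2 _ t ht hut
    have hT0 : (0:ℝ) ≤ t + t₀ := by linarith [ht.1]
    have hθT := theta_congr α hT0
    have hθ0 := theta_congr α ht₀
    have hrT := rhoL_congr α σ hT0
    have hr0 := rhoL_congr α σ ht₀
    have hcT := cL_congr α β hT0
    have hc0 := cL_congr α β ht₀
    have hiA := intA_congr α ht₀ hT0
    have hut' : rhoL (fun s => α (max s 0)) (fun s => σ (max s 0)) (t + t₀)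
        - rhoL (fun s => α (max s 0)) (fun s => σ (max s 0)) t₀ ≤ d ^ 2 := by
      rw [← hrT, ← hr0]; exact hut
    have key := key_bound hA hB hS hSpos' x₀ t₀ m d t hd ht.1 ht.2 hut'
    rw [← hΔeq] at key
    set X := Real.exp (-(thetaL (fun s => α (max s 0)) (t + t₀))) *
      Real.sqrt ((rhoL (fun s => α (max s 0)) (fun s => σ (max s 0)) (t + t₀)
          - rhoL (fun s => α (max s 0)) (fun s => σ (max s 0)) t₀) *
        Real.log (d ^ 2 / (rhoL (fun s => α (max s 0)) (fun s => σ (max s 0)) (t + t₀)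
          - rhoL (fun s => α (max s 0)) (fun s => σ (max s 0)) t₀))) with hX
    set D := cL (fun s => α (max s 0)) (fun s => β (max s 0)) (t + t₀)
      + (x₀ - cL (fun s => α (max s 0)) (fun s => β (max s 0)) t₀)
        * Real.exp (∫ s in t₀..(t + t₀), α (max s 0)) - x₀ with hD
    have hX0 : 0 ≤ X := by rw [hX]; positivity
    have hψp : psiPlusL α β σ d t₀ x₀ t = X + D + x₀ := by
      simp only [psiPlusL, psiPlus]
      rw [hθT, hrT, hr0, hcT, hc0, hiA, hX, hD]; ring
    have hψm : psiMinusL α β σ d t₀ x₀ t = -X + D + x₀ := by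
      simp only [psiMinusL, psiMinus]
      rw [hθT, hrT, hr0, hcT, hc0, hiA, hX, hD]; ring
    have hdb : d * deltaM α β σ t₀ x₀ m ≤ bGamma b γ x₀ - x₀ := (le_div_iff₀ hΔpos).1 hd1
    have hda : d * deltaM α β σ t₀ x₀ m ≤ x₀ - aGamma a γ x₀ := (le_div_iff₀ hΔpos).1 hd2
    constructor
    · rw [hψm]; linarith [key, neg_abs_le D]
    · rw [hψp]; linarith [key, le_abs_self D]
  have hRpos : 0 < rhoL α σ (t₀ + m) - rhoL α σ t₀ := by
    rw [rhoL_congr α σ (by linarith : (0:ℝ) ≤ t₀ + m), rhoL_congr α σ ht₀,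
      rho_sub hA hS t₀ (t₀ + m)]
    apply intervalIntegral.intervalIntegral_pos_of_pos_on
    · exact Continuous.intervalIntegrable (by
        exact (hS.pow 2).mul ((continuous_const.mul (theta_continuous hA)).rexp :
          Continuous fun s : ℝ => Real.exp (2 * thetaL (fun s => α (max s 0)) s))) _ _
    · intro x _; exact mul_pos (pow_pos (hSpos' x) 2) (Real.exp_pos _)
    · linarith
  have hsqR : 0 < Real.sqrt (rhoL α σ (t₀ + m) - rhoL α σ t₀) := Real.sqrt_pos.2 hRpos
  refine ⟨main, ?_, ?_⟩
  · intro κp hκeq hba t ht hut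
    have hκ : 0 < κp := by nlinarith [mul_pos hΔpos hsqR]
    have hmin : 0 < min 1 κp := lt_min one_pos hκ
    set d := min 1 κp * (bGamma b γ x₀ - x₀) / deltaM α β σ t₀ x₀ m with hdd
    have hdpos : 0 < d := div_pos (mul_pos hmin hbγ) hΔpos
    have hd1 : d ≤ (bGamma b γ x₀ - x₀) / deltaM α β σ t₀ x₀ m := by
      rw [hdd, div_le_div_iff_of_pos_right hΔpos]
      nlinarith [min_le_left 1 κp]
    have hbale : bGamma b γ x₀ - x₀ ≤ x₀ - aGamma a γ x₀ := by
      have h := mul_le_mul_of_nonneg_left hba (show (0:ℝ) ≤ 1 - γ by linarith [hγ.2])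
      simp only [aGamma, bGamma]; nlinarith [h]
    have hd2 : d ≤ (x₀ - aGamma a γ x₀) / deltaM α β σ t₀ x₀ m :=
      le_trans hd1 ((div_le_div_iff_of_pos_right hΔpos).2 hbale)
    have hdsq : d ^ 2 ≤ rhoL α σ (t₀ + m) - rhoL α σ t₀ := by
      have hdle : d ≤ Real.sqrt (rhoL α σ (t₀ + m) - rhoL α σ t₀) := by
        rw [hdd]
        have : κp * (bGamma b γ x₀ - x₀) / deltaM α β σ t₀ x₀ m
            = Real.sqrt (rhoL α σ (t₀ + m) - rhoL α σ t₀) := by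
          rw [hκeq, mul_div_assoc, mul_comm]
          field_simp
        rw [← this, div_le_div_iff_of_pos_right hΔpos]
        nlinarith [min_le_right 1 κp]
      calc d ^ 2 ≤ Real.sqrt (rhoL α σ (t₀ + m) - rhoL α σ t₀) ^ 2 := by
            exact pow_le_pow_left₀ hdpos.le hdle 2
        _ = rhoL α σ (t₀ + m) - rhoL α σ t₀ := Real.sq_sqrt hRpos.le
    exact main d hdpos hd1 hd2 hdsq t ht hut
  · intro κm hκeq hba t ht hut
    have hκ : 0 < κm := by nlinarith [mul_pos hΔpos hsqR]
    have hmin : 0 < min 1 κm := lt_min one_pos hκ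
    set d := min 1 κm * (x₀ - aGamma a γ x₀) / deltaM α β σ t₀ x₀ m with hdd
    have hdpos : 0 < d := div_pos (mul_pos hmin haγ) hΔpos
    have hd2 : d ≤ (x₀ - aGamma a γ x₀) / deltaM α β σ t₀ x₀ m := by
      rw [hdd, div_le_div_iff_of_pos_right hΔpos]
      nlinarith [min_le_left 1 κm]
    have hbale : x₀ - aGamma a γ x₀ ≤ bGamma b γ x₀ - x₀ := by
      have h := mul_le_mul_of_nonneg_left hba (show (0:ℝ) ≤ 1 - γ by linarith [hγ.2])
      simp only [aGamma, bGamma]; nlinarith [h]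
    have hd1 : d ≤ (bGamma b γ x₀ - x₀) / deltaM α β σ t₀ x₀ m :=
      le_trans hd2 ((div_le_div_iff_of_pos_right hΔpos).2 hbale)
    have hdsq : d ^ 2 ≤ rhoL α σ (t₀ + m) - rhoL α σ t₀ := by
      have hdle : d ≤ Real.sqrt (rhoL α σ (t₀ + m) - rhoL α σ t₀) := by
        rw [hdd]
        have : κm * (x₀ - aGamma a γ x₀) / deltaM α β σ t₀ x₀ m
            = Real.sqrt (rhoL α σ (t₀ + m) - rhoL α σ t₀) := by
          rw [hκeq, mul_div_assoc, mul_comm]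
          field_simp
        rw [← this, div_le_div_iff_of_pos_right hΔpos]
        nlinarith [min_le_right 1 κm]
      calc d ^ 2 ≤ Real.sqrt (rhoL α σ (t₀ + m) - rhoL α σ t₀) ^ 2 := by
            exact pow_le_pow_left₀ hdpos.le hdle 2
        _ = rhoL α σ (t₀ + m) - rhoL α σ t₀ := Real.sq_sqrt hRpos.le
    exact main d hdpos hd1 hd2 hdsq t ht hut
end

section
/- Let (Ω, ℱ, μ) be a probability space equipped with a filtration (ℱₙ)_{n∈ℕ}, and let N be a stopping time with respect to this filtration which is almost surely finite. Let G : ℕ → ℝ be a nonnegative nondecreasing function with G(0) = 0, and let (Yₙ)_{n∈ℕ} be an adapted process with Yₙ ≥ 0 almost surely for every n, such that the process (Yₙ + G(n ∧ N))_{n∈ℕ} is a supermartingale. Then E[G(N)] ≤ E[Y₀]. -/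
open MeasureTheory Filter

/-- Potential-theory bound: if `N` is an a.s. finite stopping time, `G : ℕ → ℝ` is
nonnegative, nondecreasing with `G 0 = 0`, `(Yₙ)` is a nonnegative adapted process and
`(Yₙ + G(n ∧ N))ₙ` is a supermartingale, then `E[G(N)] ≤ E[Y₀]`. -/
theorem potential_bound {Ω : Type*} {m0 : MeasurableSpace Ω} (μ : Measure Ω)
    [IsProbabilityMeasure μ] (ℱ : Filtration ℕ m0) (N : Ω → ℕ∞)
    (hstop : ∀ n : ℕ, MeasurableSet[ℱ n] {ω | N ω ≤ (n : ℕ∞)})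
    (hfin : ∀ᵐ ω ∂μ, N ω < ⊤)
    (G : ℕ → ℝ) (hG0 : G 0 = 0) (hGnonneg : ∀ n, 0 ≤ G n) (hGmono : Monotone G)
    (Y : ℕ → Ω → ℝ) (hadapted : Adapted ℱ Y)
    (hYnonneg : ∀ n, ∀ᵐ ω ∂μ, 0 ≤ Y n ω)
    (hsuper : Supermartingale (fun n ω => Y n ω + G (min (n : ℕ∞) (N ω)).toNat) ℱ μ) :
    ∫ ω, G (N ω).toNat ∂μ ≤ ∫ ω, Y 0 ω ∂μ := by
  classical
  set f : ℕ → Ω → ℝ := fun n ω => G (min (n : ℕ∞) (N ω)).toNat with hf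
  -- strong measurability of f n
  have hfm : ∀ n, StronglyMeasurable[m0] (f n) := by
    intro n
    have h1 : StronglyMeasurable[ℱ n] (fun ω => Y n ω + f n ω) := hsuper.stronglyAdapted n
    have h2 : StronglyMeasurable[ℱ n] (fun ω => (Y n ω + f n ω) - Y n ω) :=
      h1.sub (hadapted n).stronglyMeasurable
    have : StronglyMeasurable[ℱ n] (f n) := by
      convert h2 using 1; ext ω; ring
    exact this.mono (ℱ.le n)
  -- bounds on f
  have hf_nonneg : ∀ n ω, 0 ≤ f n ω := fun n ω => hGnonneg _
  have hf_le : ∀ n ω, f n ω ≤ G n := by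
    intro n ω
    exact hGmono (ENat.toNat_le_of_le_coe (min_le_left _ _))
  -- integrability of f n
  have hf_int : ∀ n, Integrable (f n) μ := by
    intro n
    refine (integrable_const (G n)).mono' (hfm n).aestronglyMeasurable ?_
    filter_upwards with ω
    rw [Real.norm_eq_abs, abs_of_nonneg (hf_nonneg n ω)]
    exact hf_le n ω
  -- integrability of Y n
  have hY_int : ∀ n, Integrable (Y n) μ := by
    intro n
    have h := (hsuper.integrable n).sub (hf_int n)
    have he : ((fun ω => Y n ω + f n ω) - f n) = Y n := by funext ω; simp
    rwa [he] at h
  -- f 0 = 0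
  have hf0 : f 0 = fun _ => (0 : ℝ) := by
    funext ω
    simp only [hf, Nat.cast_zero]
    rw [min_eq_left zero_le]
    simpa using hG0
  -- key integral bound: ∫ f n ≤ ∫ Y 0
  have key : ∀ n, ∫ ω, f n ω ∂μ ≤ ∫ ω, Y 0 ω ∂μ := by
    intro n
    have h := hsuper.setIntegral_le (Nat.zero_le n) (MeasurableSet.univ (α := Ω))
    rw [setIntegral_univ, setIntegral_univ] at h
    have h1 : ∫ ω, Y n ω ∂μ + ∫ ω, f n ω ∂μ ≤ ∫ ω, Y 0 ω ∂μ + ∫ ω, f 0 ω ∂μ := by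
      rw [← integral_add (hY_int n) (hf_int n), ← integral_add (hY_int 0) (hf_int 0)]
      exact h
    have h2 : (0:ℝ) ≤ ∫ ω, Y n ω ∂μ := integral_nonneg_of_ae (hYnonneg n)
    have h3 : ∫ ω, f 0 ω ∂μ = 0 := by rw [hf0]; simp
    linarith
  -- limit function
  set g : Ω → ℝ := fun ω => G (N ω).toNat with hg
  have hg_nonneg : ∀ ω, 0 ≤ g ω := fun ω => hGnonneg _
  -- a.e. pointwise convergence of f n to g
  have htend : ∀ᵐ ω ∂μ, Tendsto (fun n => f n ω) atTop (nhds (g ω)) := by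
    filter_upwards [hfin] with ω hω
    have : ∀ n ≥ (N ω).toNat, f n ω = g ω := by
      intro n hn
      have hNn : N ω ≤ (n : ℕ∞) := by
        rw [← ENat.coe_toNat hω.ne]
        exact_mod_cast hn
      simp only [hf, hg, min_eq_right hNn]
    exact tendsto_atTop_of_eventually_const this
  -- monotonicity in n (everywhere)
  have hmono : ∀ ω, Monotone (fun n => f n ω) := by
    intro ω m n hmn
    refine hGmono (ENat.toNat_le_toNat (min_le_min ?_ le_rfl) ?_)
    · exact_mod_cast hmn
    · exact (min_le_left _ _).trans_lt (by exact_mod_cast lt_top_iff_ne_top.mpr (ENat.coe_ne_top n)) |>.ne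
  -- switch to lintegral
  have hofReal_int : ∀ n, ∫⁻ ω, ENNReal.ofReal (f n ω) ∂μ = ENNReal.ofReal (∫ ω, f n ω ∂μ) := by
    intro n
    rw [← ofReal_integral_eq_lintegral_ofReal (hf_int n)
      (Eventually.of_forall (hf_nonneg n))]
  have hsup_eq : ∀ᵐ ω ∂μ, (⨆ n, ENNReal.ofReal (f n ω)) = ENNReal.ofReal (g ω) := by
    filter_upwards [htend] with ω hω
    have : Tendsto (fun n => ENNReal.ofReal (f n ω)) atTop (nhds (ENNReal.ofReal (g ω))) :=
      (ENNReal.continuous_ofReal.tendsto _).comp hω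
    exact tendsto_nhds_unique
      (tendsto_atTop_iSup fun m n hmn => ENNReal.ofReal_le_ofReal (hmono ω hmn)) this
  have hlin : ∫⁻ ω, ENNReal.ofReal (g ω) ∂μ ≤ ENNReal.ofReal (∫ ω, Y 0 ω ∂μ) := by
    rw [← lintegral_congr_ae hsup_eq,
      lintegral_iSup (fun n => (hfm n).measurable.ennreal_ofReal)
        (fun m n hmn ω => ENNReal.ofReal_le_ofReal (hmono ω hmn))]
    refine iSup_le fun n => ?_
    rw [hofReal_int n]
    exact ENNReal.ofReal_le_ofReal (key n)
  -- g is AEMeasurable, hence integrable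
  have hgm : AEStronglyMeasurable g μ := by
    refine aestronglyMeasurable_of_tendsto_ae atTop
      (fun n => (hfm n).aestronglyMeasurable) htend
  have hg_int : Integrable g μ := by
    refine ⟨hgm, ?_⟩
    rw [hasFiniteIntegral_iff_ofReal (Eventually.of_forall hg_nonneg)]
    exact hlin.trans_lt ENNReal.ofReal_lt_top
  -- conclude
  have hY0 : (0:ℝ) ≤ ∫ ω, Y 0 ω ∂μ := integral_nonneg_of_ae (hYnonneg 0)
  have := integral_eq_lintegral_of_nonneg_ae (Eventually.of_forall hg_nonneg) hgm
  rw [hg] at this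
  rw [this]
  calc (∫⁻ ω, ENNReal.ofReal (g ω) ∂μ).toReal
      ≤ (ENNReal.ofReal (∫ ω, Y 0 ω ∂μ)).toReal :=
        ENNReal.toReal_mono ENNReal.ofReal_ne_top hlin
    _ = ∫ ω, Y 0 ω ∂μ := ENNReal.toReal_ofReal hY0
end
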